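/- arXiv:2306.16370 — 6 statements merged into one kernel-verified Lean document; each statement's English description precedes it below -/
import Mathlib

section
/- Let T be a tree and f a condensation of T. Then f is an automorphism of T if and only if ht(t) = ht(f(t)) for every t ∈ T. -/
/- A tree is a partial order in which the set of strict predecessors of every
element is well-ordered. Basic vocabulary: condensations, automorphisms,
reversibility, heights, levels, nodes, upward closures, branches. -/

universe u v

/- The height of an element `t`: the order type of the set `(·,t)` of its strict
predecessors (which is well-ordered when the order is a tree). -/
open Classical in
noncomputable def treeHt {T : Type u} [PartialOrder T] (t : T) : Ordinal.{u} :=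
  if h : IsWellOrder {s : T // s < t} (fun a b => (a : T) < (b : T)) then
    @Ordinal.type {s : T // s < t} (fun a b => (a : T) < (b : T)) h
  else 0

/-- A partial order is a tree iff every set `(·,t)` is well-ordered by `<`. -/
def IsTree (T : Type u) [PartialOrder T] : Prop :=
  ∀ t : T, IsWellOrder {s : T // s < t} (fun a b => (a : T) < (b : T))

/-- A condensation: a bijective endomorphism. -/
def IsCond {T : Type u} [PartialOrder T] (f : T → T) : Prop :=
  Function.Bijective f ∧ ∀ s t : T, s < t → f s < f t

/-- An automorphism: a bijection preserving and reflecting `<`. -/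
def IsAuto {T : Type u} [PartialOrder T] (f : T → T) : Prop :=
  Function.Bijective f ∧ ∀ s t : T, s < t ↔ f s < f t

/-- A structure is reversible iff every condensation is an automorphism. -/
def Reversible (T : Type u) [PartialOrder T] : Prop :=
  ∀ f : T → T, IsCond f → IsAuto f

/-- The `α`-th level: elements of height `α`. -/
def level (T : Type u) [PartialOrder T] (α : Ordinal.{u}) : Set T :=
  {t : T | treeHt t = α}

/-- The height of the tree: the least ordinal `α` with `L_α = ∅`. -/
noncomputable def treeHeight (T : Type u) [PartialOrder T] : Ordinal.{u} :=
  sInf {α : Ordinal.{u} | level T α = ∅}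

/-- Nodes: equivalence classes of the relation `s ∼ t` iff `(·,s) = (·,t)`. -/
def IsNode {T : Type u} [PartialOrder T] (N : Set T) : Prop :=
  ∃ t : T, N = {s : T | Set.Iio s = Set.Iio t}

/-- `S↑`, the upward closure of `S`. -/
def upClo {T : Type u} [PartialOrder T] (S : Set T) : Set T :=
  {t : T | ∃ s ∈ S, s ≤ t}

/-- A branch: a maximal chain. -/
def IsBranch {T : Type u} [PartialOrder T] (b : Set T) : Prop :=
  IsMaxChain (· ≤ ·) b

/- The height (order type) of a chain (junk value `0` if not well-ordered;
in a tree every chain is well-ordered). -/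
open Classical in
noncomputable def chainHt {T : Type u} [PartialOrder T] (b : Set T) : Ordinal.{u} :=
  if h : IsWellOrder b (fun x y : b => (x : T) < (y : T)) then
    @Ordinal.type b (fun x y : b => (x : T) < (y : T)) h
  else 0

/-
Heights are strictly monotone in a tree, and the predecessors of `t` realise every height below
`ht(t)` exactly once, since `ht(s) = typein s` on the well-ordered set `(·,t)`. An automorphism
preserves order types, hence heights. Conversely, if `f` preserves heights and `f s < f t`, then
`ht(s) < ht(t)`, so some `s' < t` has the height of `s`; now `f s'` and `f s` lie below `f t` with
equal heights, so they coincide, and `s = s' < t` by injectivity.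
-/

section TreeHeight

variable {T : Type u} [PartialOrder T]

theorem treeHt_eq_type (hT : IsTree T) (t : T) :
    treeHt t = @Ordinal.type {s : T // s < t} (fun a b => (a : T) < (b : T)) (hT t) :=
  dif_pos (hT t)

theorem treeHt_eq_typein (hT : IsTree T) {s t : T} (h : s < t) :
    treeHt s = @Ordinal.typein {x : T // x < t} (fun a b => (a : T) < (b : T)) (hT t) ⟨s, h⟩ := by
  have := hT t
  have := hT s
  rw [treeHt_eq_type hT s, ← Ordinal.type_subrel]
  exact Ordinal.type_eq.2 ⟨⟨⟨fun x => ⟨⟨x, x.2.trans h⟩, x.2⟩, fun y => ⟨y.1.1, y.2⟩,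
    fun _ => rfl, fun _ => rfl⟩, Iff.rfl⟩⟩

theorem treeHt_lt_treeHt (hT : IsTree T) {s t : T} (h : s < t) : treeHt s < treeHt t := by
  have := hT t
  rw [treeHt_eq_typein hT h, treeHt_eq_type hT t]
  exact Ordinal.typein_lt_type _ _

theorem exists_lt_treeHt_eq_of_lt_treeHt (hT : IsTree T) {t : T} {α : Ordinal.{u}}
    (h : α < treeHt t) : ∃ s < t, treeHt s = α := by
  have := hT t
  rw [treeHt_eq_type hT t] at h
  obtain ⟨⟨s, hs⟩, rfl⟩ := Ordinal.typein_surj _ h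
  exact ⟨s, hs, treeHt_eq_typein hT hs⟩

theorem eq_of_lt_of_lt_of_treeHt_eq (hT : IsTree T) {a b t : T} (ha : a < t) (hb : b < t)
    (h : treeHt a = treeHt b) : a = b := by
  have := hT t
  rw [treeHt_eq_typein hT ha, treeHt_eq_typein hT hb] at h
  exact congrArg Subtype.val (Ordinal.typein_injective _ h)

theorem treeHt_map_orderIso {T' : Type u} [PartialOrder T'] (e : T ≃o T') (t : T) :
    treeHt (e t) = treeHt t := by
  let r : (fun a b : {s : T // s < t} => (a : T) < (b : T)) ≃r
      (fun a b : {s : T' // s < e t} => (a : T') < (b : T')) :=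
    ⟨e.toEquiv.subtypeEquiv fun _ => e.lt_iff_lt.symm, e.lt_iff_lt⟩
  unfold treeHt
  by_cases h : IsWellOrder {s : T // s < t} (fun a b => (a : T) < (b : T))
  · have := r.symm.toRelEmbedding.isWellOrder
    rw [dif_pos h, dif_pos this]
    exact Ordinal.type_eq.2 ⟨r.symm⟩
  · have h' : ¬IsWellOrder {s : T' // s < e t} (fun a b => (a : T') < (b : T')) :=
      fun _ => h r.toRelEmbedding.isWellOrder
    rw [dif_neg h, dif_neg h']

end TreeHeight

section Condensation

variable {T : Type u} [PartialOrder T] {f : T → T}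

noncomputable def IsAuto.toOrderIso (hf : IsAuto f) : T ≃o T :=
  OrderIso.ofRelIsoLT ⟨Equiv.ofBijective f hf.1, (hf.2 _ _).symm⟩

theorem IsAuto.treeHt_apply (hf : IsAuto f) (t : T) : treeHt (f t) = treeHt t :=
  treeHt_map_orderIso hf.toOrderIso t

theorem IsCond.isAuto_of_treeHt_eq (hT : IsTree T) (hf : IsCond f)
    (hht : ∀ t, treeHt t = treeHt (f t)) : IsAuto f := by
  refine ⟨hf.1, fun s t => ⟨hf.2 s t, fun hfst => ?_⟩⟩
  have hst : treeHt s < treeHt t := by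
    rw [hht s, hht t]
    exact treeHt_lt_treeHt hT hfst
  obtain ⟨s', hs't, hs'⟩ := exists_lt_treeHt_eq_of_lt_treeHt hT hst
  have : f s' = f s :=
    eq_of_lt_of_lt_of_treeHt_eq hT (hf.2 _ _ hs't) hfst (by rw [← hht, ← hht, hs'])
  rwa [← hf.1.1 this]

end Condensation

/-- Let `T` be a tree and `f` a condensation of `T`. Then `f` is an
automorphism of `T` iff `ht(t) = ht(f(t))` for every `t ∈ T`. -/
theorem stmt0 {T : Type u} [PartialOrder T] (hT : IsTree T)
    (f : T → T) (hf : IsCond f) :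
    IsAuto f ↔ ∀ t : T, treeHt t = treeHt (f t) :=
  ⟨fun hA t => (hA.treeHt_apply t).symm, hf.isAuto_of_treeHt_eq hT⟩
end

section
/- A tree T is reversible if and only if for every node N of T and every nonempty subset S ⊆ N, the tree S↑ (with the induced order) is reversible. -/
/- A tree is a partial order in which the set of strict predecessors of every
element is well-ordered. Basic vocabulary: condensations, automorphisms,
reversibility, heights, levels, nodes, upward closures, branches. -/

universe u v

lemma exists_min {T : Type u} [PartialOrder T] (hT : IsTree T) (t : T) :
    ∃ s : T, Set.Iio s = (∅ : Set T) ∧ s ≤ t := by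
  by_cases h : Set.Iio t = (∅ : Set T)
  · exact ⟨t, h, le_rfl⟩
  · obtain ⟨x, hx⟩ := Set.nonempty_iff_ne_empty.2 h
    obtain ⟨⟨m, hmt⟩, _, hmin⟩ :=
      (hT t).toIsWellFounded.wf.has_min Set.univ ⟨⟨x, hx⟩, trivial⟩
    refine ⟨m, ?_, le_of_lt hmt⟩
    ext s
    simp only [Set.mem_Iio, Set.mem_empty_iff_false, iff_false]
    intro hsm
    exact hmin ⟨s, lt_trans hsm hmt⟩ trivial hsm

/-- A tree `T` is reversible iff for every node `N` of `T` and every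
nonempty `S ⊆ N`, the tree `S↑` (with the induced order) is reversible. -/
theorem stmt2 {T : Type u} [PartialOrder T] (hT : IsTree T) :
    Reversible T ↔
      ∀ N : Set T, IsNode N → ∀ S : Set T, S ⊆ N → S.Nonempty →
        Reversible ↥(upClo S) := by
  classical
  constructor
  · -- forward direction
    intro hRev N hN S hSN hSne g hg
    obtain ⟨t₀, hNdef⟩ := hN
    have hIio : ∀ a ∈ S, Set.Iio a = Set.Iio t₀ := by
      intro a ha
      have := hSN ha
      rw [hNdef] at this
      exact this
    have hup : ∀ s t : T, s ∈ upClo S → s ≤ t → t ∈ upClo S := by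
      rintro s t ⟨a, haS, has⟩ hst
      exact ⟨a, haS, le_trans has hst⟩
    -- key: if s < t, t ∈ upClo S, s ∉ upClo S, then s is below every element of U
    have key : ∀ s t : T, s < t → t ∈ upClo S → s ∉ upClo S → ∀ y ∈ upClo S, s < y := by
      intro s t hst htU hsU y hyU
      obtain ⟨b, hbS, hbt⟩ := htU
      obtain ⟨a, haS, hay⟩ := hyU
      have hsb : s < b := by
        rcases lt_or_eq_of_le hbt with hbt' | rfl
        · rcases (by haveI := hT t; exact trichotomous_of (fun a b : {x : T // x < t} => (a : T) < (b : T)) ⟨s, hst⟩ ⟨b, hbt'⟩) with h | h | h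
          · exact h
          · exact absurd ⟨b, hbS, le_of_eq (congrArg Subtype.val h).symm⟩ hsU
          · exact absurd ⟨b, hbS, le_of_lt h⟩ hsU
        · exact hst
      have : s ∈ Set.Iio a := by
        rw [hIio a haS, ← hIio b hbS]
        exact hsb
      exact lt_of_lt_of_le this hay
    -- extend g by the identity
    set f : T → T := fun x => if h : x ∈ upClo S then (g ⟨x, h⟩ : T) else x with hf
    have hfU : ∀ (x : T) (h : x ∈ upClo S), f x = (g ⟨x, h⟩ : T) := by
      intro x h; simp only [hf, dif_pos h]
    have hfnU : ∀ x : T, x ∉ upClo S → f x = x := by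
      intro x h; simp only [hf, dif_neg h]
    have hmemU : ∀ (x : T) (h : x ∈ upClo S), f x ∈ upClo S := by
      intro x h; rw [hfU x h]; exact (g ⟨x, h⟩).2
    have hinj : Function.Injective f := by
      intro x y hxy
      by_cases hx : x ∈ upClo S <;> by_cases hy : y ∈ upClo S
      · rw [hfU x hx, hfU y hy] at hxy
        have := hg.1.1 (Subtype.coe_injective hxy)
        exact congrArg Subtype.val this
      · rw [hfnU y hy] at hxy
        exact absurd (hxy ▸ hmemU x hx) hy
      · rw [hfnU x hx] at hxy
        exact absurd (hxy ▸ hmemU y hy) hx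
      · rw [hfnU x hx, hfnU y hy] at hxy; exact hxy
    have hsurj : Function.Surjective f := by
      intro y
      by_cases hy : y ∈ upClo S
      · obtain ⟨x, hx⟩ := hg.1.2 ⟨y, hy⟩
        refine ⟨(x : T), ?_⟩
        rw [hfU (x : T) x.2, Subtype.eta, hx]
      · exact ⟨y, hfnU y hy⟩
    have hmono : ∀ s t : T, s < t → f s < f t := by
      intro s t hst
      by_cases hs : s ∈ upClo S
      · have ht : t ∈ upClo S := hup s t hs (le_of_lt hst)
        rw [hfU s hs, hfU t ht]
        exact hg.2 ⟨s, hs⟩ ⟨t, ht⟩ (Subtype.mk_lt_mk.2 hst)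
      · by_cases ht : t ∈ upClo S
        · rw [hfnU s hs, hfU t ht]
          exact key s t hst ht hs _ (g ⟨t, ht⟩).2
        · rw [hfnU s hs, hfnU t ht]; exact hst
    have hfauto := hRev f ⟨⟨hinj, hsurj⟩, hmono⟩
    refine ⟨hg.1, fun x y => ⟨fun h => hg.2 x y h, fun h => ?_⟩⟩
    have h' : f (x : T) < f (y : T) := by
      rw [hfU _ x.2, hfU _ y.2, Subtype.eta, Subtype.eta]
      exact Subtype.coe_lt_coe.2 h
    exact Subtype.mk_lt_mk.2 ((hfauto.2 _ _).2 h')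
  · -- backward direction
    intro h f hf
    rcases isEmpty_or_nonempty T with hE | hNE
    · exact ⟨hf.1, fun s t => hE.elim s⟩
    · obtain ⟨t⟩ := hNE
      obtain ⟨m, hm, _⟩ := exists_min hT t
      set N : Set T := {s : T | Set.Iio s = Set.Iio m} with hNdef
      have hNnode : IsNode N := ⟨m, rfl⟩
      have hmN : m ∈ N := rfl
      have hUuniv : ∀ x : T, x ∈ upClo N := by
        intro x
        obtain ⟨s, hs, hsx⟩ := exists_min hT x
        exact ⟨s, by rw [hNdef]; simp only [Set.mem_setOf_eq]; rw [hs, hm], hsx⟩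
      have hRevU := h N hNnode N (fun _ h => h) ⟨m, hmN⟩
      set g : ↥(upClo N) → ↥(upClo N) := fun x => ⟨f (x : T), hUuniv _⟩ with hgdef
      have hgc : IsCond g := by
        refine ⟨⟨?_, ?_⟩, ?_⟩
        · intro x y hxy
          exact Subtype.ext (hf.1.1 (congrArg Subtype.val hxy))
        · intro y
          obtain ⟨x, hx⟩ := hf.1.2 (y : T)
          exact ⟨⟨x, hUuniv x⟩, Subtype.ext hx⟩
        · intro x y hxy
          exact Subtype.mk_lt_mk.2 (hf.2 _ _ (Subtype.coe_lt_coe.2 hxy))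
      have hgauto := hRevU g hgc
      refine ⟨hf.1, fun s t => ⟨fun h' => hf.2 s t h', fun h' => ?_⟩⟩
      have := (hgauto.2 ⟨s, hUuniv s⟩ ⟨t, hUuniv t⟩).2 (Subtype.mk_lt_mk.2 h')
      exact Subtype.mk_lt_mk.1 this
end

section
/- Every bad tree is not reversible. -/
/- A tree is a partial order in which the set of strict predecessors of every
element is well-ordered. Basic vocabulary: condensations, automorphisms,
reversibility, heights, levels, nodes, upward closures, branches. -/

universe u v

/-- A tree is bad iff `ht(T) = |T| = |L_0|` is an infinite regular cardinal and
every branch of `T` has height `ht(T)`. -/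
def IsBad (T : Type u) [PartialOrder T] : Prop :=
  Cardinal.IsRegular (Cardinal.mk T) ∧
  treeHeight T = (Cardinal.mk T).ord ∧
  Cardinal.mk ↥(level T 0) = Cardinal.mk T ∧
  ∀ b : Set T, IsBranch b → chainHt b = treeHeight T


open Cardinal Set

namespace Stmt3Aux

variable {T : Type u} [PartialOrder T]

theorem comparable_below (hT : IsTree T) {t x y : T} (hx : x ≤ t) (hy : y ≤ t) :
    x ≤ y ∨ y ≤ x := by
  rcases eq_or_lt_of_le hx with rfl | hx'
  · exact Or.inr hy
  rcases eq_or_lt_of_le hy with rfl | hy'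
  · exact Or.inl hx
  haveI := hT t
  rcases trichotomous_of (fun a b : {s : T // s < t} => (a : T) < (b : T)) ⟨x, hx'⟩ ⟨y, hy'⟩ with
    h | h | h
  · exact Or.inl h.le
  · exact Or.inl (le_of_eq (congrArg Subtype.val h))
  · exact Or.inr h.le

theorem wf_lt (hT : IsTree T) : WellFounded ((· < ·) : T → T → Prop) := by
  constructor
  intro a
  have hwf := (hT a).toIsWellFounded.wf
  have main : ∀ s : {s : T // s < a}, Acc ((· < ·) : T → T → Prop) s.1 := by
    intro s
    induction s using WellFounded.induction hwf with
    | _ x ih =>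
      exact Acc.intro _ fun y hy => ih ⟨y, lt_trans hy x.2⟩ hy
  exact Acc.intro a fun y hy => main ⟨y, hy⟩

noncomputable def rt (hT : IsTree T) (t : T) : T :=
  (wf_lt hT).min {s | s ≤ t} ⟨t, le_refl t⟩

theorem rt_le (hT : IsTree T) (t : T) : rt hT t ≤ t :=
  (wf_lt hT).min_mem {s | s ≤ t} ⟨t, le_refl t⟩

theorem rt_root (hT : IsTree T) (t : T) : ∀ x, ¬ x < rt hT t := by
  intro x hx
  exact (wf_lt hT).not_lt_min {s | s ≤ t}
    (le_trans hx.le (rt_le hT t)) hx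

theorem rt_eq (hT : IsTree T) {s t : T} (h : s ≤ t) : rt hT s = rt hT t := by
  have h1 : rt hT s ≤ t := le_trans (rt_le hT s) h
  have h2 : rt hT t ≤ t := rt_le hT t
  rcases comparable_below hT h1 h2 with h' | h'
  · rcases eq_or_lt_of_le h' with e | l
    · exact e
    · exact absurd l (rt_root hT t _)
  · rcases eq_or_lt_of_le h' with e | l
    · exact e.symm
    · exact absurd l (rt_root hT s _)

theorem rt_of_root (hT : IsTree T) {r : T} (hr : ∀ x, ¬ x < r) : rt hT r = r := by
  rcases eq_or_lt_of_le (rt_le hT r) with e | l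
  · exact e
  · exact absurd l (hr _)

theorem chain_wo (hT : IsTree T) {b : Set T} (hb : IsChain (· ≤ ·) b) :
    IsWellOrder b (fun x y : b => (x : T) < (y : T)) := by
  haveI h1 : IsTrichotomous b (fun x y : b => (x : T) < (y : T)) := by
    constructor
    rintro ⟨x, hx⟩ ⟨y, hy⟩ h1 h2
    by_cases e : x = y
    · exact Subtype.ext e
    rcases hb hx hy e with h | h
    · exact absurd (lt_of_le_of_ne h e) h1
    · exact absurd (lt_of_le_of_ne h (Ne.symm e)) h2
  haveI h2 : IsTrans b (fun x y : b => (x : T) < (y : T)) :=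
    ⟨fun _ _ _ hxy hyz => lt_trans hxy hyz⟩
  haveI h3 : IsWellFounded b (fun x y : b => (x : T) < (y : T)) :=
    ⟨InvImage.wf (fun x : b => (x : T)) (wf_lt hT)⟩
  constructor

theorem branch_type (hT : IsTree T) (hbad : IsBad T) {b : Set T} (hb : IsBranch b) :
    @Ordinal.type b (fun x y : b => (x : T) < (y : T)) (chain_wo hT hb.1) = (#T).ord := by
  have h := hbad.2.2.2 b hb
  rw [hbad.2.1] at h
  rw [chainHt, dif_pos (chain_wo hT hb.1)] at h
  exact h

theorem branch_card (hT : IsTree T) (hbad : IsBad T) {b : Set T} (hb : IsBranch b) :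
    Cardinal.mk b = #T := by
  have := congrArg Ordinal.card (branch_type hT hbad hb)
  rwa [Ordinal.card_type, Cardinal.card_ord] at this

theorem card_pred_lt (hT : IsTree T) (hbad : IsBad T) (t : T) :
    #{s : T // s < t} < #T := by
  have hc : IsChain (· ≤ ·) (insert t {s : T | s < t}) := by
    intro x hx y hy _
    have hx' : x ≤ t := by rcases hx with rfl | hx; exact le_refl _; exact le_of_lt hx
    have hy' : y ≤ t := by rcases hy with rfl | hy; exact le_refl _; exact le_of_lt hy
    exact comparable_below hT hx' hy'
  obtain ⟨m, hm, hsub⟩ := hc.exists_maxChain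
  haveI := chain_wo hT hm.1
  have htype := branch_type hT hbad hm
  have htm : t ∈ m := hsub (mem_insert _ _)
  have hle : #{s : T // s < t} ≤
      #{y : m // (fun x y : m => (x : T) < (y : T)) y ⟨t, htm⟩} := by
    refine mk_le_of_injective (f := fun s =>
      ⟨⟨s.1, hsub (mem_insert_of_mem _ s.2)⟩, s.2⟩) ?_
    intro a b hab
    exact Subtype.ext (congrArg (fun x => (x.1 : T)) hab)
  have h2 := Ordinal.card_typein (r := fun x y : m => (x : T) < (y : T)) (⟨t, htm⟩ : m)
  have h3 : Ordinal.typein (fun x y : m => (x : T) < (y : T)) ⟨t, htm⟩ < (#T).ord := by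
    rw [← htype]; exact Ordinal.typein_lt_type _ _
  calc #{s : T // s < t} ≤ _ := hle
    _ = _ := h2
    _ < #T := Cardinal.lt_ord.mp h3

theorem exists_above (hT : IsTree T) (hbad : IsBad T) (c used : Set T)
    (hc : IsChain (· ≤ ·) c) (hcc : #c < #T) (hu : #used < #T) :
    ∃ z : T, z ∉ used ∧ ∀ s ∈ c, s < z := by
  classical
  obtain ⟨m, hm, hsub⟩ := hc.exists_maxChain
  haveI := chain_wo hT hm.1
  have htype := branch_type hT hbad hm
  set R := (fun x y : m => (x : T) < (y : T)) with hR
  set o := Ordinal.lsub.{u,u} (fun s : c => Ordinal.typein R ⟨s.1, hsub s.2⟩) with ho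
  have ho_lt : o < (#T).ord := by
    apply Ordinal.lsub_lt_ord
    · rw [(hbad.1).cof_eq]; exact hcc
    · intro i; rw [← htype]; exact Ordinal.typein_lt_type _ _
  have hZ : ∃ x : m, o ≤ Ordinal.typein R x ∧ (x : T) ∉ used := by
    by_contra hcon
    push_neg at hcon
    have hforall : ∀ x : m, Ordinal.typein R x < o ∨ (x : T) ∈ used := by
      intro x
      by_cases h : o ≤ Ordinal.typein R x
      · exact Or.inr (hcon x h)
      · exact Or.inl (lt_of_not_ge h)
    have hinj : ∃ φ : m → o.ToType ⊕ used, Function.Injective φ := by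
      refine ⟨fun x => if h : Ordinal.typein R x < o then
        Sum.inl (Ordinal.ToType.mk ⟨Ordinal.typein R x, Set.mem_Iio.mpr h⟩)
        else Sum.inr ⟨x, (hforall x).resolve_left h⟩, ?_⟩
      intro x y hxy
      dsimp only at hxy
      split_ifs at hxy with hx hy' hy'
      · have := (Ordinal.ToType.mk (o := o)).injective (Sum.inl.inj hxy)
        have h2 : Ordinal.typein R x = Ordinal.typein R y := congrArg Subtype.val this
        exact Ordinal.typein_injective R h2
      all_goals first
        | exact Subtype.ext (by simpa using hxy)
        | exact absurd hxy (by simp)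
        | simp at hxy
    obtain ⟨φ, hφ⟩ := hinj
    have hcard : #m ≤ #(o.ToType ⊕ used) := mk_le_of_injective hφ
    have hsum : #(o.ToType ⊕ ↥used) = o.card + #used := by
      simp [Cardinal.mk_sum, Cardinal.mk_toType, Cardinal.lift_id]
    rw [hsum] at hcard
    have hlt : o.card + #used < #T :=
      Cardinal.add_lt_of_lt (hbad.1.aleph0_le) (Cardinal.lt_ord.mp ho_lt) hu
    have hbm := branch_card hT hbad hm
    rw [hbm] at hcard
    exact absurd (lt_of_le_of_lt hcard hlt) (lt_irrefl _)
  obtain ⟨x, hx1, hx2⟩ := hZ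
  refine ⟨x, hx2, ?_⟩
  intro s hs
  have h1 : Ordinal.typein R ⟨s, hsub hs⟩ < o := Ordinal.lt_lsub _ (⟨s, hs⟩ : c)
  have h2 : Ordinal.typein R ⟨s, hsub hs⟩ < Ordinal.typein R x := lt_of_lt_of_le h1 hx1
  exact (Ordinal.typein_lt_typein R).mp h2


/-! ### Index set -/

noncomputable local instance (o : Ordinal.{u}) : IsWellOrder o.ToType (· < ·) :=
  isWellOrder_lt

abbrev Idx (T : Type u) : Type u := (Cardinal.mk T).ord.ToType

omit [PartialOrder T] in
theorem wfI : WellFounded ((· < ·) : Idx T → Idx T → Prop) :=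
  IsWellFounded.wf

omit [PartialOrder T] in
theorem type_I : Ordinal.type ((· < ·) : Idx T → Idx T → Prop) = (#T).ord :=
  Ordinal.type_toType _

omit [PartialOrder T] in
theorem mk_I : #(Idx T) = #T := by
  rw [Cardinal.mk_toType, Cardinal.card_ord]

omit [PartialOrder T] in
theorem card_Iio_lt (i : Idx T) : #(Set.Iio i) < #T :=
  Cardinal.mk_Iio_ord_toType i

theorem card_Iic_lt (hbad : IsBad T) (i : Idx T) : #(Set.Iic i) < #T := by
  have h1 : (Set.Iic i : Set (Idx T)) ⊆ insert i (Set.Iio i) := by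
    intro x hx
    rcases eq_or_lt_of_le (mem_Iic.mp hx) with e | l
    · exact mem_insert_iff.mpr (Or.inl e)
    · exact mem_insert_iff.mpr (Or.inr l)
  calc #(Set.Iic i : Set (Idx T)) ≤ #(insert i (Set.Iio i) : Set (Idx T)) :=
        mk_le_mk_of_subset h1
    _ ≤ #(Set.Iio i) + 1 := mk_insert_le
    _ < #T := Cardinal.add_lt_of_lt hbad.1.aleph0_le (card_Iio_lt i)
        (lt_of_lt_of_le one_lt_aleph0 hbad.1.aleph0_le)

theorem bounded_lt (hbad : IsBad T) (B : Set (Idx T)) (hB : #B < #T) :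
    ∃ j : Idx T, ∀ b ∈ B, b < j := by
  set o := Ordinal.lsub.{u,u}
    (fun b : B => Ordinal.typein ((· < ·) : Idx T → Idx T → Prop) b.1) with ho
  have ho_lt : o < (#T).ord := by
    apply Ordinal.lsub_lt_ord
    · rw [hbad.1.cof_eq]; exact hB
    · intro b
      have h := Ordinal.typein_lt_type ((· < ·) : Idx T → Idx T → Prop) b.1
      rwa [type_I] at h
  rw [← type_I (T := T)] at ho_lt
  obtain ⟨j, hj⟩ := Ordinal.typein_surj _ ho_lt
  refine ⟨j, fun b hb => ?_⟩
  have h1 : Ordinal.typein ((· < ·) : Idx T → Idx T → Prop) b < o :=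
    Ordinal.lt_lsub _ (⟨b, hb⟩ : B)
  rw [← hj] at h1
  exact (Ordinal.typein_lt_typein _).mp h1

/-! ### The context -/

structure Ctx (T : Type u) [PartialOrder T] : Type u where
  hT : IsTree T
  hbad : IsBad T
  e : Idx T ≃ T
  pr : (Idx T × Idx T) ≃ Idx T
  r₀ : T
  hr₀ : ∀ x, ¬ x < r₀
  i₀ : Idx T
  i₁ : Idx T
  hne : i₀ ≠ i₁

variable {Γ : Ctx T}

noncomputable def seci (Γ : Ctx T) (m : Idx T) : Idx T := (Γ.pr.symm m).1

/-- `m` is the birth step of chain `i₀`. -/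
def i0b (Γ : Ctx T) (m : Idx T) : Prop :=
  seci Γ m = Γ.i₀ ∧ ∀ m' : Idx T, m' < m → seci Γ m' ≠ Γ.i₀

def CandP (Γ : Ctx T) (m : Idx T) (g : ∀ m' : Idx T, m' < m → T) : Set T :=
  {t | (∀ m' (h : m' < m), g m' h ≠ t) ∧ t ≠ Γ.r₀ ∧
    (∀ m' (h : m' < m), seci Γ m' = seci Γ m → g m' h < t) ∧
    (seci Γ m = Γ.i₁ → Γ.r₀ < t)}

open Classical in
noncomputable def Abody (Γ : Ctx T) (m : Idx T) (g : ∀ m' : Idx T, m' < m → T) : T :=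
  if i0b Γ m then Γ.r₀
  else if h : {j : Idx T | Γ.e j ∈ CandP Γ m g}.Nonempty then
    Γ.e ((wfI).min _ h)
  else Γ.r₀

noncomputable def A (Γ : Ctx T) : Idx T → T :=
  (wfI).fix (Abody Γ)

theorem A_eq (Γ : Ctx T) (m : Idx T) :
    A Γ m = Abody Γ m (fun m' _ => A Γ m') :=
  WellFounded.fix_eq _ _ _

def Cand (Γ : Ctx T) (m : Idx T) : Set T := CandP Γ m (fun m' _ => A Γ m')

theorem A_spec (Γ : Ctx T) : ∀ m : Idx T,
    (i0b Γ m ∧ A Γ m = Γ.r₀) ∨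
    (¬ i0b Γ m ∧ A Γ m ∈ Cand Γ m ∧
      ∀ t ∈ Cand Γ m, Γ.e.symm (A Γ m) ≤ Γ.e.symm t) := by
  intro m
  induction m using WellFounded.induction (wfI (T := T)) with
  | _ m IH =>
  by_cases hb : i0b Γ m
  · left
    refine ⟨hb, ?_⟩
    rw [A_eq, Abody, if_pos hb]
  · right
    -- previously established facts
    have hmono : ∀ m₁ m₂ : Idx T, m₁ < m₂ → m₂ < m → seci Γ m₁ = seci Γ m₂ →
        A Γ m₁ < A Γ m₂ := by
      intro m₁ m₂ h12 h2m hsec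
      rcases IH m₂ h2m with ⟨hb2, _⟩ | ⟨_, hc2, _⟩
      · exact absurd hb2.1 (by rw [← hsec]; exact hb2.2 m₁ h12)
      · exact hc2.2.2.1 m₁ h12 hsec
    have hi1 : ∀ m' : Idx T, m' < m → seci Γ m' = Γ.i₁ → Γ.r₀ < A Γ m' := by
      intro m' hm' hsec
      rcases IH m' hm' with ⟨hb2, _⟩ | ⟨_, hc2, _⟩
      · exact absurd (hb2.1.symm.trans hsec) Γ.hne
      · exact hc2.2.2.2 hsec
    set chainS : Set T :=
      (A Γ '' {m' : Idx T | m' < m ∧ seci Γ m' = seci Γ m}) ∪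
        (if seci Γ m = Γ.i₁ then {Γ.r₀} else ∅) with hchainS
    have hchain : IsChain (· ≤ ·) chainS := by
      intro a ha b hb' hab
      have key : ∀ x y : T, x ∈ chainS → y ∈ chainS → x ≠ y → x < y ∨ y < x ∨ x = y := by
        intro x y hx hy hxy
        rcases hx with ⟨m₁, hm₁, rfl⟩ | hx
        · rcases hy with ⟨m₂, hm₂, rfl⟩ | hy
          · rcases lt_trichotomy m₁ m₂ with h | h | h
            · exact Or.inl (hmono m₁ m₂ h hm₂.1 (hm₁.2.trans hm₂.2.symm))
            · exact Or.inr (Or.inr (by rw [h]))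
            · exact Or.inr (Or.inl (hmono m₂ m₁ h hm₁.1 (hm₂.2.trans hm₁.2.symm)))
          · have hsec : seci Γ m = Γ.i₁ := by
              by_contra hcon
              rw [if_neg hcon] at hy
              exact hy
            rw [if_pos hsec] at hy
            rcases hy with rfl
            exact Or.inr (Or.inl (hi1 m₁ hm₁.1 (hm₁.2.trans hsec)))
        · have hsec : seci Γ m = Γ.i₁ := by
            by_contra hcon
            rw [if_neg hcon] at hx
            exact hx
          rw [if_pos hsec] at hx
          rcases hx with rfl
          rcases hy with ⟨m₂, hm₂, rfl⟩ | hy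
          · exact Or.inl (hi1 m₂ hm₂.1 (hm₂.2.trans hsec))
          · rw [if_pos hsec] at hy
            rcases hy with rfl
            exact Or.inr (Or.inr rfl)
      rcases key a b ha hb' hab with h | h | h
      · exact Or.inl h.le
      · exact Or.inr h.le
      · exact absurd h hab
    set used : Set T := (A Γ '' Set.Iio m) ∪ {Γ.r₀} with hused
    have hsmall : ∀ S : Set T, S ⊆ (A Γ '' Set.Iio m) ∪ {Γ.r₀} → #S < #T := by
      intro S hS
      calc #S ≤ #((A Γ '' Set.Iio m) ∪ {Γ.r₀} : Set T) := mk_le_mk_of_subset hS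
        _ ≤ #(A Γ '' Set.Iio m) + #({Γ.r₀} : Set T) := mk_union_le _ _
        _ ≤ #(Set.Iio m) + 1 := by
            refine add_le_add mk_image_le ?_
            rw [Cardinal.mk_singleton]
        _ < #T := Cardinal.add_lt_of_lt Γ.hbad.1.aleph0_le (card_Iio_lt m)
            (lt_of_lt_of_le one_lt_aleph0 Γ.hbad.1.aleph0_le)
    have hcc : #chainS < #T := by
      refine hsmall chainS ?_
      intro x hx
      rcases hx with ⟨m', hm', rfl⟩ | hx
      · exact Or.inl ⟨m', hm'.1, rfl⟩
      · by_cases hsec : seci Γ m = Γ.i₁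
        · rw [if_pos hsec] at hx
          exact Or.inr hx
        · rw [if_neg hsec] at hx
          exact absurd hx (notMem_empty x)
    have hu : #used < #T := hsmall used (by rw [hused])
    obtain ⟨z, hz1, hz2⟩ := exists_above Γ.hT Γ.hbad chainS used hchain hcc hu
    have hzc : z ∈ Cand Γ m := by
      refine ⟨?_, ?_, ?_, ?_⟩
      · intro m' h hcon
        exact hz1 (Or.inl ⟨m', h, hcon⟩)
      · intro hcon
        exact hz1 (Or.inr (by rw [hcon]; exact rfl))
      · intro m' h hsec
        exact hz2 _ (Or.inl ⟨m', ⟨h, hsec⟩, rfl⟩)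
      · intro hsec
        exact hz2 _ (Or.inr (by rw [if_pos hsec]; exact rfl))
    have hne : {j : Idx T | Γ.e j ∈ CandP Γ m (fun m' _ => A Γ m')}.Nonempty := by
      refine ⟨Γ.e.symm z, ?_⟩
      show Γ.e (Γ.e.symm z) ∈ CandP Γ m _
      rw [Equiv.apply_symm_apply]
      exact hzc
    have hA : A Γ m = Γ.e ((wfI).min _ hne) := by
      rw [A_eq, Abody, if_neg hb, dif_pos hne]
    refine ⟨hb, ?_, ?_⟩
    · rw [hA]
      exact (wfI).min_mem _ hne
    · intro t ht
      have hmem : Γ.e.symm t ∈ {j : Idx T | Γ.e j ∈ CandP Γ m (fun m' _ => A Γ m')} := by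
        show Γ.e (Γ.e.symm t) ∈ CandP Γ m _
        rw [Equiv.apply_symm_apply]
        exact ht
      have := (wfI).not_lt_min _ hmem
      rw [hA, Equiv.symm_apply_apply]
      exact not_lt.mp this


theorem seci_pr (Γ : Ctx T) (i x : Idx T) : seci Γ (Γ.pr (i, x)) = i := by
  simp [seci]

theorem A_ne (Γ : Ctx T) {m' m : Idx T} (h : m' < m) : A Γ m' ≠ A Γ m := by
  rcases A_spec Γ m with ⟨hb, he⟩ | ⟨_, hc, _⟩
  · rw [he]
    rcases A_spec Γ m' with ⟨hb', _⟩ | ⟨_, hc', _⟩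
    · exact absurd hb'.1 (hb.2 m' h)
    · exact hc'.2.1
  · exact hc.1 m' h

theorem A_inj (Γ : Ctx T) : Function.Injective (A Γ) := by
  intro a b hab
  rcases lt_trichotomy a b with h | h | h
  · exact absurd hab (A_ne Γ h)
  · exact h
  · exact absurd hab.symm (A_ne Γ h)

theorem A_mono (Γ : Ctx T) {m' m : Idx T} (h : m' < m) (hs : seci Γ m' = seci Γ m) :
    A Γ m' < A Γ m := by
  rcases A_spec Γ m with ⟨hb, _⟩ | ⟨_, hc, _⟩
  · exact absurd (hs.trans hb.1) (hb.2 m' h)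
  · exact hc.2.2.1 m' h hs

theorem A_i1 (Γ : Ctx T) {m : Idx T} (hs : seci Γ m = Γ.i₁) : Γ.r₀ < A Γ m := by
  rcases A_spec Γ m with ⟨hb, _⟩ | ⟨_, hc, _⟩
  · exact absurd (hb.1.symm.trans hs) Γ.hne
  · exact hc.2.2.2 hs

noncomputable def birth (Γ : Ctx T) (ι : Idx T) : Idx T :=
  (wfI (T := T)).min {m : Idx T | seci Γ m = ι} ⟨Γ.pr (ι, ι), seci_pr Γ ι ι⟩

theorem seci_birth (Γ : Ctx T) (ι : Idx T) : seci Γ (birth Γ ι) = ι :=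
  (wfI (T := T)).min_mem {m : Idx T | seci Γ m = ι} _

theorem birth_least (Γ : Ctx T) (ι : Idx T) {m' : Idx T} (h : m' < birth Γ ι) :
    seci Γ m' ≠ ι := by
  intro hcon
  exact (wfI (T := T)).not_lt_min {m : Idx T | seci Γ m = ι} hcon h

theorem A_birth_i0 (Γ : Ctx T) : A Γ (birth Γ Γ.i₀) = Γ.r₀ := by
  rcases A_spec Γ (birth Γ Γ.i₀) with ⟨_, he⟩ | ⟨hnb, _, _⟩
  · exact he
  · exact absurd ⟨seci_birth Γ Γ.i₀, fun m' h => birth_least Γ Γ.i₀ h⟩ hnb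

theorem A_surj (Γ : Ctx T) (t : T) : ∃ m : Idx T, A Γ m = t := by
  by_contra hcon
  push_neg at hcon
  have htr0 : t ≠ Γ.r₀ := fun h => hcon (birth Γ Γ.i₀) (by rw [A_birth_i0, h])
  have hgen : ∀ ι : Idx T, ι ≠ Γ.i₀ → ι ≠ Γ.i₁ →
      Γ.e.symm (A Γ (birth Γ ι)) ≤ Γ.e.symm t := by
    intro ι h0 h1
    have hnb : ¬ i0b Γ (birth Γ ι) := fun hb => h0 ((seci_birth Γ ι).symm.trans hb.1)
    rcases A_spec Γ (birth Γ ι) with ⟨hb, _⟩ | ⟨_, _, hmin⟩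
    · exact absurd hb hnb
    · refine hmin t ⟨fun m' _ => hcon m', htr0, ?_, ?_⟩
      · intro m' h hsec
        exact absurd (hsec.trans (seci_birth Γ ι)) (birth_least Γ ι h)
      · intro hsec
        exact absurd ((seci_birth Γ ι).symm.trans hsec) h1
  set Sgen : Set (Idx T) := {ι : Idx T | ι ≠ Γ.i₀ ∧ ι ≠ Γ.i₁} with hSgen
  have hinj : #Sgen ≤ #(Set.Iic (Γ.e.symm t)) := by
    refine mk_le_of_injective (f := fun ι =>
      (⟨Γ.e.symm (A Γ (birth Γ ι.1)), hgen ι.1 ι.2.1 ι.2.2⟩ : Set.Iic (Γ.e.symm t))) ?_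
    intro a b hab
    have h1 : Γ.e.symm (A Γ (birth Γ a.1)) = Γ.e.symm (A Γ (birth Γ b.1)) :=
      congrArg Subtype.val hab
    have h2 : birth Γ a.1 = birth Γ b.1 := A_inj Γ (Γ.e.symm.injective h1)
    have h3 : a.1 = b.1 := by
      rw [← seci_birth Γ a.1, ← seci_birth Γ b.1, h2]
    exact Subtype.ext h3
  have hcover : #(univ : Set (Idx T)) ≤ #Sgen + #({Γ.i₀, Γ.i₁} : Set (Idx T)) := by
    have hsub : (univ : Set (Idx T)) ⊆ Sgen ∪ {Γ.i₀, Γ.i₁} := by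
      intro x _
      by_cases h0 : x = Γ.i₀
      · exact Or.inr (by simp [h0])
      by_cases h1 : x = Γ.i₁
      · exact Or.inr (by simp [h1])
      · exact Or.inl ⟨h0, h1⟩
    calc #(univ : Set (Idx T)) ≤ #(Sgen ∪ {Γ.i₀, Γ.i₁} : Set (Idx T)) :=
          mk_le_mk_of_subset hsub
      _ ≤ _ := mk_union_le _ _
  have hpair : #({Γ.i₀, Γ.i₁} : Set (Idx T)) ≤ 2 := by
    calc #({Γ.i₀, Γ.i₁} : Set (Idx T)) ≤ #({Γ.i₁} : Set (Idx T)) + 1 := mk_insert_le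
      _ = 2 := by rw [Cardinal.mk_singleton]; norm_num
  have huniv : #(univ : Set (Idx T)) = #T := by rw [Cardinal.mk_univ, mk_I]
  have h2T : (2 : Cardinal) < #T := by
    refine lt_of_lt_of_le ?_ Γ.hbad.1.aleph0_le
    have : ((2 : ℕ) : Cardinal.{u}) < ℵ₀ := Cardinal.nat_lt_aleph0 2
    simpa using this
  have hlt : #Sgen < #T := lt_of_le_of_lt hinj (card_Iic_lt Γ.hbad _)
  have hfin : #T < #T := by
    rw [← huniv]
    refine lt_of_le_of_lt hcover ?_
    rw [huniv]
    exact Cardinal.add_lt_of_lt Γ.hbad.1.aleph0_le hlt (lt_of_le_of_lt hpair h2T)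
  exact absurd hfin (lt_irrefl _)


/-! ### The greedy enumeration of a cone -/

def CandFP (Γ : Ctx T) (ι : Idx T) (r : T) (j : Idx T)
    (g : ∀ j' : Idx T, j' < j → T) : Set T :=
  {c | rt Γ.hT c = r ∧ (∀ j' (h : j' < j), seci Γ j' = ι → g j' h ≠ c) ∧
    (∀ x : T, x < c → ∃ j', ∃ h : j' < j, seci Γ j' = ι ∧ g j' h = x)}

open Classical in
noncomputable def Fbody (Γ : Ctx T) (ι : Idx T) (r : T) (j : Idx T)
    (g : ∀ j' : Idx T, j' < j → T) : T :=
  if h : {k : Idx T | Γ.e k ∈ CandFP Γ ι r j g}.Nonempty then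
    Γ.e ((wfI (T := T)).min _ h)
  else Γ.r₀

noncomputable def F (Γ : Ctx T) (ι : Idx T) (r : T) : Idx T → T :=
  (wfI (T := T)).fix (Fbody Γ ι r)

theorem F_eq (Γ : Ctx T) (ι : Idx T) (r : T) (j : Idx T) :
    F Γ ι r j = Fbody Γ ι r j (fun j' _ => F Γ ι r j') :=
  WellFounded.fix_eq _ _ _

def CandF (Γ : Ctx T) (ι : Idx T) (r : T) (j : Idx T) : Set T :=
  CandFP Γ ι r j (fun j' _ => F Γ ι r j')

theorem card_cone (Γ : Ctx T) (r : T) (hr : ∀ x, ¬ x < r) :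
    #({t : T | rt Γ.hT t = r}) = #T := by
  have hch : IsChain (· ≤ ·) ({r} : Set T) := by
    intro x hx y hy hne
    rcases hx with rfl
    rcases hy with rfl
    exact absurd rfl hne
  obtain ⟨m, hm, hsub⟩ := hch.exists_maxChain
  have hrm : r ∈ m := hsub rfl
  have hmc : m ⊆ {t : T | rt Γ.hT t = r} := by
    intro x hx
    have hrx : r ≤ x := by
      by_cases hxr : x = r
      · exact le_of_eq hxr.symm
      rcases hm.1 hx hrm hxr with h | h
      · rcases eq_or_lt_of_le h with e | l
        · exact le_of_eq e.symm
        · exact absurd l (hr x)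
      · exact h
    show rt Γ.hT x = r
    rw [← rt_eq Γ.hT hrx, rt_of_root Γ.hT hr]
  refine le_antisymm (mk_set_le _) ?_
  calc #T = #m := (branch_card Γ.hT Γ.hbad hm).symm
    _ ≤ #({t : T | rt Γ.hT t = r}) := mk_le_of_injective (f := fun x => ⟨x.1, hmc x.2⟩)
        (by
          intro a b hab
          have h2 := congrArg Subtype.val hab
          exact Subtype.ext h2)

theorem F_spec (Γ : Ctx T) (ι : Idx T) (r : T) (hr : ∀ x, ¬ x < r) (j : Idx T) :
    F Γ ι r j ∈ CandF Γ ι r j ∧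
      ∀ c ∈ CandF Γ ι r j, Γ.e.symm (F Γ ι r j) ≤ Γ.e.symm c := by
  classical
  set placed : Set T :=
    {c : T | ∃ j', ∃ _ : j' < j, seci Γ j' = ι ∧ F Γ ι r j' = c} with hplaced
  have hpl_small : #placed < #T := by
    have hsub : placed ⊆ (fun j' => F Γ ι r j') '' (Set.Iio j) := by
      rintro c ⟨j', hj', _, rfl⟩
      exact ⟨j', hj', rfl⟩
    calc #placed ≤ #((fun j' => F Γ ι r j') '' (Set.Iio j)) := mk_le_mk_of_subset hsub
      _ ≤ #(Set.Iio j) := mk_image_le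
      _ < #T := card_Iio_lt j
  have hU : ({t : T | rt Γ.hT t = r} \ placed).Nonempty := by
    rw [Set.nonempty_iff_ne_empty]
    intro hcon
    have hsub : {t : T | rt Γ.hT t = r} ⊆ placed := by
      intro x hx
      by_contra hxp
      exact (Set.eq_empty_iff_forall_notMem.mp hcon) x ⟨hx, hxp⟩
    have := mk_le_mk_of_subset hsub
    rw [card_cone Γ r hr] at this
    exact absurd (lt_of_le_of_lt this hpl_small) (lt_irrefl _)
  obtain ⟨c₁, hc₁⟩ := hU
  have hcand : (CandF Γ ι r j).Nonempty := by
    by_cases hP : ({x : T | x < c₁ ∧ x ∈ ({t : T | rt Γ.hT t = r} \ placed)}).Nonempty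
    · set cs := (wf_lt Γ.hT).min _ hP with hcs
      have hcs_mem := (wf_lt Γ.hT).min_mem _ hP
      refine ⟨cs, hcs_mem.2.1, ?_, ?_⟩
      · intro j' h hsec hcon
        exact hcs_mem.2.2 ⟨j', h, hsec, hcon⟩
      · intro x hx
        have hxcone : rt Γ.hT x = r := by
          rw [rt_eq Γ.hT (le_of_lt hx)]
          exact hcs_mem.2.1
        have hxnotU : x ∉ ({t : T | rt Γ.hT t = r} \ placed) := by
          intro hxU
          exact (wf_lt Γ.hT).not_lt_min {x : T | x < c₁ ∧ x ∈ ({t : T | rt Γ.hT t = r} \ placed)} ⟨lt_trans hx hcs_mem.1, hxU⟩ hx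
        have hxp : x ∈ placed := by
          by_contra hxp
          exact hxnotU ⟨hxcone, hxp⟩
        obtain ⟨j', h, hsec, he⟩ := hxp
        exact ⟨j', h, hsec, he⟩
    · refine ⟨c₁, hc₁.1, ?_, ?_⟩
      · intro j' h hsec hcon
        exact hc₁.2 ⟨j', h, hsec, hcon⟩
      · intro x hx
        have hxcone : rt Γ.hT x = r := by
          rw [rt_eq Γ.hT (le_of_lt hx)]
          exact hc₁.1
        have hxp : x ∈ placed := by
          by_contra hxp
          exact hP ⟨x, hx, hxcone, hxp⟩
        obtain ⟨j', h, hsec, he⟩ := hxp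
        exact ⟨j', h, hsec, he⟩
  obtain ⟨c0, hc0⟩ := hcand
  have hne : {k : Idx T | Γ.e k ∈ CandFP Γ ι r j (fun j' _ => F Γ ι r j')}.Nonempty := by
    refine ⟨Γ.e.symm c0, ?_⟩
    show Γ.e (Γ.e.symm c0) ∈ CandFP Γ ι r j _
    rw [Equiv.apply_symm_apply]
    exact hc0
  have hF : F Γ ι r j = Γ.e ((wfI (T := T)).min _ hne) := by
    rw [F_eq, Fbody, dif_pos hne]
  constructor
  · rw [hF]
    exact (wfI (T := T)).min_mem _ hne
  · intro c hc
    have hmem : Γ.e.symm c ∈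
        {k : Idx T | Γ.e k ∈ CandFP Γ ι r j (fun j' _ => F Γ ι r j')} := by
      show Γ.e (Γ.e.symm c) ∈ CandFP Γ ι r j _
      rw [Equiv.apply_symm_apply]
      exact hc
    have := (wfI (T := T)).not_lt_min _ hmem
    rw [hF, Equiv.symm_apply_apply]
    exact not_lt.mp this

theorem F_rt (Γ : Ctx T) (ι : Idx T) (r : T) (hr : ∀ x, ¬ x < r) (j : Idx T) :
    rt Γ.hT (F Γ ι r j) = r :=
  (F_spec Γ ι r hr j).1.1

theorem F_ne (Γ : Ctx T) (ι : Idx T) (r : T) (hr : ∀ x, ¬ x < r) {j' j : Idx T}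
    (h : j' < j) (hs : seci Γ j' = ι) : F Γ ι r j' ≠ F Γ ι r j :=
  (F_spec Γ ι r hr j).1.2.1 j' h hs

theorem F_inj (Γ : Ctx T) (ι : Idx T) (r : T) (hr : ∀ x, ¬ x < r) {j' j : Idx T}
    (hs' : seci Γ j' = ι) (hs : seci Γ j = ι) (he : F Γ ι r j' = F Γ ι r j) : j' = j := by
  rcases lt_trichotomy j' j with h | h | h
  · exact absurd he (F_ne Γ ι r hr h hs')
  · exact h
  · exact absurd he.symm (F_ne Γ ι r hr h hs)

theorem F_pred (Γ : Ctx T) (ι : Idx T) (r : T) (hr : ∀ x, ¬ x < r) {j : Idx T} {x : T}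
    (hx : x < F Γ ι r j) : ∃ j', ∃ _ : j' < j, seci Γ j' = ι ∧ F Γ ι r j' = x :=
  (F_spec Γ ι r hr j).1.2.2 x hx

theorem card_sec (Γ : Ctx T) (ι : Idx T) : #({j : Idx T | seci Γ j = ι}) = #T := by
  have heq : (Idx T) ≃ {j : Idx T | seci Γ j = ι} := by
    refine ⟨fun x => ⟨Γ.pr (ι, x), seci_pr Γ ι x⟩, fun j => (Γ.pr.symm j.1).2, ?_, ?_⟩
    · intro x
      simp
    · intro j
      refine Subtype.ext ?_
      show Γ.pr (ι, (Γ.pr.symm j.1).2) = j.1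
      have h1 : (Γ.pr.symm j.1).1 = ι := j.2
      conv_rhs => rw [← Equiv.apply_symm_apply Γ.pr j.1]
      congr 1
      exact Prod.ext h1.symm rfl
  rw [← mk_congr heq, mk_I]

theorem F_surj (Γ : Ctx T) (ι : Idx T) (r : T) (hr : ∀ x, ¬ x < r) (c : T)
    (hc : rt Γ.hT c = r) : ∃ j : Idx T, seci Γ j = ι ∧ F Γ ι r j = c := by
  by_contra hcon
  push_neg at hcon
  set U : Set T := {x : T | rt Γ.hT x = r ∧ ∀ j : Idx T, seci Γ j = ι → F Γ ι r j ≠ x}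
    with hU
  have hUne : U.Nonempty := ⟨c, hc, hcon⟩
  set cs := (wf_lt Γ.hT).min U hUne with hcs
  have hcs_mem := (wf_lt Γ.hT).min_mem U hUne
  have hpreds : ∀ x : T, x < cs → ∃ j : Idx T, seci Γ j = ι ∧ F Γ ι r j = x := by
    intro x hx
    have hxcone : rt Γ.hT x = r := by
      rw [rt_eq Γ.hT (le_of_lt hx)]
      exact hcs_mem.1
    have hxnU : x ∉ U := fun hxU => (wf_lt Γ.hT).not_lt_min U hxU hx
    by_contra hcon2
    push_neg at hcon2
    exact hxnU ⟨hxcone, fun j hj => hcon2 j hj⟩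
  set B : Set (Idx T) := {j : Idx T | seci Γ j = ι ∧ F Γ ι r j < cs} with hB
  have hBsmall : #B < #T := by
    have hle : #B ≤ #{x : T // x < cs} := by
      refine mk_le_of_injective (f := fun j => (⟨F Γ ι r j.1, j.2.2⟩ : {x : T // x < cs})) ?_
      intro a b hab
      exact Subtype.ext (F_inj Γ ι r hr a.2.1 b.2.1 (congrArg Subtype.val hab))
    exact lt_of_le_of_lt hle (card_pred_lt Γ.hT Γ.hbad cs)
  obtain ⟨jb, hjb⟩ := bounded_lt Γ.hbad B hBsmall
  have hkey : ∀ j : Idx T, seci Γ j = ι → jb ≤ j →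
      Γ.e.symm (F Γ ι r j) ≤ Γ.e.symm cs := by
    intro j hsec hjbj
    refine (F_spec Γ ι r hr j).2 cs ⟨hcs_mem.1, ?_, ?_⟩
    · intro j' _ hsec' hcon'
      exact hcs_mem.2 j' hsec' hcon'
    · intro x hx
      obtain ⟨jx, hjx1, hjx2⟩ := hpreds x hx
      have hjxB : jx ∈ B := ⟨hjx1, by rw [hjx2]; exact hx⟩
      exact ⟨jx, lt_of_lt_of_le (hjb jx hjxB) hjbj, hjx1, hjx2⟩
  set TS : Set (Idx T) := {j : Idx T | seci Γ j = ι ∧ jb ≤ j} with hTS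
  have hTSsmall : #TS < #T := by
    have hle : #TS ≤ #(Set.Iic (Γ.e.symm cs)) := by
      refine mk_le_of_injective (f := fun j =>
        (⟨Γ.e.symm (F Γ ι r j.1), hkey j.1 j.2.1 j.2.2⟩ : Set.Iic (Γ.e.symm cs))) ?_
      intro a b hab
      have h1 := Γ.e.symm.injective (congrArg Subtype.val hab)
      exact Subtype.ext (F_inj Γ ι r hr a.2.1 b.2.1 h1)
    exact lt_of_le_of_lt hle (card_Iic_lt Γ.hbad _)
  have hcover : ({j : Idx T | seci Γ j = ι}) ⊆ TS ∪ Set.Iio jb := by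
    intro j hj
    by_cases h : jb ≤ j
    · exact Or.inl ⟨hj, h⟩
    · exact Or.inr (lt_of_not_ge h)
  have hbig := card_sec Γ ι
  have : #T ≤ #TS + #(Set.Iio jb) := by
    calc #T = #({j : Idx T | seci Γ j = ι}) := hbig.symm
      _ ≤ #((TS ∪ Set.Iio jb : Set (Idx T))) := mk_le_mk_of_subset hcover
      _ ≤ _ := mk_union_le _ _
  have hlt : #TS + #(Set.Iio jb) < #T :=
    Cardinal.add_lt_of_lt Γ.hbad.1.aleph0_le hTSsmall (card_Iio_lt jb)
  exact absurd (lt_of_le_of_lt this hlt) (lt_irrefl _)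


/-! ### Roots -/

theorem treeHt_zero_iff (hT : IsTree T) (t : T) : treeHt t = 0 ↔ ∀ x, ¬ x < t := by
  haveI := hT t
  rw [treeHt, dif_pos (hT t), Ordinal.type_eq_zero_iff_isEmpty]
  constructor
  · intro h x hx
    exact h.elim ⟨x, hx⟩
  · intro h
    exact ⟨fun s => h s.1 s.2⟩

theorem card_roots (hT : IsTree T) (hbad : IsBad T) :
    #({r : T | ∀ x, ¬ x < r}) = #T := by
  have h := hbad.2.2.1
  have hset : (level T 0) = {r : T | ∀ x, ¬ x < r} := Set.ext fun t => treeHt_zero_iff hT t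
  rw [← hset]
  exact h

end Stmt3Aux





/-- Every bad tree is not reversible. -/
theorem stmt3 {T : Type u} [PartialOrder T] (hT : IsTree T) (hbad : IsBad T) :
    ¬ Reversible T := by
  classical
  open Stmt3Aux in
  intro hrev
  have hreg := hbad.1
  have hmkI : #(Stmt3Aux.Idx T) = #T := Stmt3Aux.mk_I
  have hmkII : #((Stmt3Aux.Idx T) × (Stmt3Aux.Idx T)) = #(Stmt3Aux.Idx T) := by
    calc #((Stmt3Aux.Idx T) × (Stmt3Aux.Idx T))
        = #(Stmt3Aux.Idx T) * #(Stmt3Aux.Idx T) := by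
          simp [Cardinal.mk_prod]
      _ = #T * #T := by rw [hmkI]
      _ = #T := Cardinal.mul_eq_self hreg.aleph0_le
      _ = #(Stmt3Aux.Idx T) := hmkI.symm
  obtain ⟨e⟩ := Cardinal.eq.mp hmkI
  obtain ⟨pr⟩ := Cardinal.eq.mp hmkII
  have hroots : #({r : T | ∀ x, ¬ x < r}) = #(Stmt3Aux.Idx T) :=
    (Stmt3Aux.card_roots hT hbad).trans hmkI.symm
  obtain ⟨τ⟩ := Cardinal.eq.mp hroots
  have hnontriv : Nontrivial (Stmt3Aux.Idx T) := by
    rw [← Cardinal.one_lt_iff_nontrivial, hmkI]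
    exact lt_of_lt_of_le Cardinal.one_lt_aleph0 hreg.aleph0_le
  obtain ⟨i₀, i₁, hne⟩ := hnontriv.exists_pair_ne
  set ρ₀ := τ.symm i₀ with hρ₀
  set ρ₁ := τ.symm i₁ with hρ₁
  let Γ : Stmt3Aux.Ctx T := ⟨hT, hbad, e, pr, ρ₀.1, ρ₀.2, i₀, i₁, hne⟩
  let Roots : Set T := {r : T | ∀ x, ¬ x < r}
  let ρof : T → Roots := fun c => ⟨Stmt3Aux.rt Γ.hT c, Stmt3Aux.rt_root Γ.hT c⟩
  have hFS : ∀ c : T, ∃ j : Stmt3Aux.Idx T,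
      Stmt3Aux.seci Γ j = τ (ρof c) ∧ Stmt3Aux.F Γ (τ (ρof c)) (ρof c).1 j = c :=
    fun c => Stmt3Aux.F_surj Γ (τ (ρof c)) (ρof c).1 (ρof c).2 c rfl
  let Finv : T → Stmt3Aux.Idx T := fun c => Classical.choose (hFS c)
  have hFinv : ∀ c : T, Stmt3Aux.seci Γ (Finv c) = τ (ρof c) ∧
      Stmt3Aux.F Γ (τ (ρof c)) (ρof c).1 (Finv c) = c :=
    fun c => Classical.choose_spec (hFS c)
  have huniq : ∀ (c : T) (j : Stmt3Aux.Idx T), Stmt3Aux.seci Γ j = τ (ρof c) →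
      Stmt3Aux.F Γ (τ (ρof c)) (ρof c).1 j = c → Finv c = j := by
    intro c j hs hF
    exact Stmt3Aux.F_inj Γ _ _ (ρof c).2 (hFinv c).1 hs ((hFinv c).2.trans hF.symm)
  have hkey : ∀ (ρ : Roots) (j : Stmt3Aux.Idx T), Stmt3Aux.seci Γ j = τ ρ →
      Finv (Stmt3Aux.F Γ (τ ρ) ρ.1 j) = j := by
    intro ρ j hs
    have hρ : ρof (Stmt3Aux.F Γ (τ ρ) ρ.1 j) = ρ :=
      Subtype.ext (Stmt3Aux.F_rt Γ (τ ρ) ρ.1 ρ.2 j)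
    refine huniq _ j ?_ ?_
    · rw [hρ]; exact hs
    · rw [hρ]
  let f : T → T := fun c => Stmt3Aux.A Γ (Finv c)
  have hinj : Function.Injective f := by
    intro c c' h
    have hj : Finv c = Finv c' := Stmt3Aux.A_inj Γ h
    have hs : τ (ρof c) = τ (ρof c') := by
      have h1 := (hFinv c).1
      have h2 := (hFinv c').1
      rw [← hj] at h2
      exact h1.symm.trans h2
    have hρ : ρof c = ρof c' := τ.injective hs
    have h1 := (hFinv c).2
    have h2 := (hFinv c').2
    rw [← hρ, ← hj] at h2
    exact h1.symm.trans h2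
  have hsurj : Function.Surjective f := by
    intro u
    obtain ⟨m, hm⟩ := Stmt3Aux.A_surj Γ u
    have hs : Stmt3Aux.seci Γ m = τ (τ.symm (Stmt3Aux.seci Γ m)) :=
      (Equiv.apply_symm_apply τ _).symm
    refine ⟨Stmt3Aux.F Γ (τ (τ.symm (Stmt3Aux.seci Γ m))) (τ.symm (Stmt3Aux.seci Γ m)).1 m, ?_⟩
    show Stmt3Aux.A Γ (Finv _) = u
    rw [hkey (τ.symm (Stmt3Aux.seci Γ m)) m hs]
    exact hm
  have hpres : ∀ s t : T, s < t → f s < f t := by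
    intro s t hst
    have hrr : Stmt3Aux.rt Γ.hT s = Stmt3Aux.rt Γ.hT t := Stmt3Aux.rt_eq Γ.hT (le_of_lt hst)
    have hρ : ρof s = ρof t := Subtype.ext hrr
    have hFt := (hFinv t).2
    have hpred := Stmt3Aux.F_pred Γ (τ (ρof t)) (ρof t).1 (ρof t).2
      (j := Finv t) (x := s) (by rw [hFt]; exact hst)
    obtain ⟨j', hj', hsec', hFj'⟩ := hpred
    have hjs : Finv s = j' := by
      refine huniq s j' ?_ ?_
      · rw [hρ]; exact hsec'
      · rw [hρ]; exact hFj'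
    show Stmt3Aux.A Γ (Finv s) < Stmt3Aux.A Γ (Finv t)
    rw [hjs]
    refine Stmt3Aux.A_mono Γ hj' ?_
    rw [hsec']
    exact (hFinv t).1.symm
  have hcond : IsCond f := ⟨⟨hinj, hsurj⟩, hpres⟩
  have hauto := hrev f hcond
  -- the two special elements
  have hsb : Stmt3Aux.seci Γ (Stmt3Aux.birth Γ i₀) = τ ρ₀ := by
    rw [hρ₀, Equiv.apply_symm_apply]
    exact Stmt3Aux.seci_birth Γ i₀
  set sstar := Stmt3Aux.F Γ (τ ρ₀) ρ₀.1 (Stmt3Aux.birth Γ i₀) with hsstar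
  have hfs : f sstar = Stmt3Aux.A Γ (Stmt3Aux.birth Γ i₀) := by
    show Stmt3Aux.A Γ (Finv sstar) = _
    rw [hsstar, hkey ρ₀ _ hsb]
  have hfs' : f sstar = ρ₀.1 := hfs.trans (Stmt3Aux.A_birth_i0 Γ)
  set m₁ := Γ.pr (i₁, i₁) with hm₁
  have hsm1 : Stmt3Aux.seci Γ m₁ = τ ρ₁ := by
    rw [hρ₁, Equiv.apply_symm_apply]
    exact Stmt3Aux.seci_pr Γ i₁ i₁
  set tstar := Stmt3Aux.F Γ (τ ρ₁) ρ₁.1 m₁ with htstar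
  have hft : f tstar = Stmt3Aux.A Γ m₁ := by
    show Stmt3Aux.A Γ (Finv tstar) = _
    rw [htstar, hkey ρ₁ m₁ hsm1]
  have hlt : f sstar < f tstar := by
    rw [hfs', hft]
    exact Stmt3Aux.A_i1 Γ (Stmt3Aux.seci_pr Γ i₁ i₁)
  have hst : sstar < tstar := (hauto.2 sstar tstar).mpr hlt
  have hrteq : Stmt3Aux.rt Γ.hT sstar = Stmt3Aux.rt Γ.hT tstar :=
    Stmt3Aux.rt_eq Γ.hT (le_of_lt hst)
  rw [hsstar, htstar, Stmt3Aux.F_rt Γ _ _ ρ₀.2, Stmt3Aux.F_rt Γ _ _ ρ₁.2] at hrteq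
  have : ρ₀ = ρ₁ := Subtype.ext hrteq
  have h2 := congrArg τ this
  rw [hρ₀, hρ₁, Equiv.apply_symm_apply, Equiv.apply_symm_apply] at h2
  exact hne h2
end

section
/- If a tree T has a node N and a nonempty subset S ⊆ N such that the tree S↑ (with the induced order) is bad, then T is not reversible. -/
/- A tree is a partial order in which the set of strict predecessors of every
element is well-ordered. Basic vocabulary: condensations, automorphisms,
reversibility, heights, levels, nodes, upward closures, branches. -/

universe u v

namespace StmtAux

open Cardinal

variable {A : Type u} [PartialOrder A]


variable {A : Type u} [PartialOrder A]

/-- subtrees are trees -/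
lemma isTree_subtype {T : Type u} [PartialOrder T] (hT : IsTree T) (P : Set T) :
    IsTree (↥P) := by
  intro t
  have emb : (fun (a b : {s : ↥P // s < t}) => (a : ↥P) < (b : ↥P)) ↪r
      (fun (a b : {s : T // s < (t : T)}) => (a : T) < (b : T)) := by
    refine ⟨⟨fun x => ⟨(x.1 : T), ?_⟩, ?_⟩, ?_⟩
    · exact x.2
    · intro x y h
      exact Subtype.ext (Subtype.ext (Subtype.mk_eq_mk.mp h))
    · intro x y
      exact Iff.rfl
  exact @RelEmbedding.isWellOrder _ _ _ _ emb (hT (t : T))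

lemma treeHt_eq (hA : IsTree A) (t : A) :
    treeHt t = @Ordinal.type {s : A // s < t} (fun a b => (a : A) < (b : A)) (hA t) := by
  rw [treeHt, dif_pos (hA t)]

lemma treeHt_lt (hA : IsTree A) {a b : A} (h : a < b) : treeHt a < treeHt b := by
  rw [treeHt_eq hA a, treeHt_eq hA b]
  haveI := hA a; haveI := hA b
  refine PrincipalSeg.ordinal_type_lt (r := fun x y : {s : A // s < a} => (x:A) < y)
    (s := fun x y : {s : A // s < b} => (x:A) < y) ?_
  refine ⟨⟨⟨fun x => ⟨(x : A), lt_trans x.2 h⟩, ?_⟩, ?_⟩, ⟨a, h⟩, ?_⟩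
  · intro x y hxy
    exact Subtype.ext (Subtype.mk_eq_mk.mp hxy)
  · intro x y; exact Iff.rfl
  · intro x
    constructor
    · rintro ⟨y, rfl⟩; exact y.2
    · intro hx
      exact ⟨⟨(x : A), hx⟩, rfl⟩

lemma tree_lt_wf (hA : IsTree A) : WellFounded ((· < ·) : A → A → Prop) :=
  Subrelation.wf (fun h => treeHt_lt hA h) (InvImage.wf treeHt Ordinal.lt_wf)

/-- predecessors of an element are linearly ordered -/
lemma iio_cmp (hA : IsTree A) {t x y : A} (hx : x < t) (hy : y < t) :
    x < y ∨ x = y ∨ y < x := by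
  haveI := hA t
  rcases @trichotomous _ (fun a b : {s : A // s < t} => (a:A) < b) _ ⟨x, hx⟩ ⟨y, hy⟩ with
    h | h | h
  · exact Or.inl h
  · exact Or.inr (Or.inl (congrArg Subtype.val h))
  · exact Or.inr (Or.inr h)

lemma iic_cmp (hA : IsTree A) {t x y : A} (hx : x ≤ t) (hy : y ≤ t) :
    x ≤ y ∨ y ≤ x := by
  rcases eq_or_lt_of_le hx with rfl | hx'
  · exact Or.inr hy
  rcases eq_or_lt_of_le hy with rfl | hy'
  · exact Or.inl hx
  rcases iio_cmp hA hx' hy' with h | h | h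
  · exact Or.inl h.le
  · exact Or.inl h.le
  · exact Or.inr h.le

lemma chain_isWellOrder (hA : IsTree A) {m : Set A} (hm : IsChain (· ≤ ·) m) :
    IsWellOrder ↥m (fun x y : ↥m => (x : A) < (y : A)) := by
  have htri : ∀ x y : ↥m, (x : A) < (y : A) ∨ x = y ∨ (y : A) < (x : A) := by
    intro x y
    by_cases hxy : x = y
    · exact Or.inr (Or.inl hxy)
    rcases hm x.2 y.2 (fun h => hxy (Subtype.ext h)) with h | h
    · exact Or.inl (lt_of_le_of_ne h (fun h' => hxy (Subtype.ext h')))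
    · exact Or.inr (Or.inr (lt_of_le_of_ne h (fun h' => hxy (Subtype.ext h'.symm))))
  exact { wf := InvImage.wf _ (tree_lt_wf hA),
          trichotomous := fun x y h1 h2 => ((htri x y).resolve_left h1).resolve_right h2 }

section X

variable (hcmp : ∀ {t x y : A}, x ≤ t → y ≤ t → x ≤ y ∨ y ≤ x)
  (hwo : ∀ {m : Set A}, IsChain (· ≤ ·) m →
    IsWellOrder ↥m (fun x y : ↥m => (x : A) < (y : A)))
  (hbr : ∀ m : Set A, IsMaxChain (· ≤ ·) m → chainHt m = (#A).ord)

include hcmp hwo hbr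

lemma branch_type {m : Set A} (hm : IsMaxChain (· ≤ ·) m) :
    @Ordinal.type ↥m (fun x y : ↥m => (x : A) < (y : A)) (hwo hm.1) = (#A).ord := by
  have := hbr m hm
  rwa [chainHt, dif_pos (hwo hm.1)] at this

lemma branch_card {m : Set A} (hm : IsMaxChain (· ≤ ·) m) : #↥m = #A := by
  haveI := hwo hm.1
  have h := congrArg Ordinal.card (branch_type hcmp hwo hbr hm)
  rwa [Ordinal.card_type, Cardinal.card_ord] at h

/-- all sets of predecessors are small -/
lemma iio_small (t : A) : #↥(Set.Iio t) < #A := by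
  have hch : IsChain (· ≤ ·) (Set.Iic t) := by
    intro x hx y hy _
    exact hcmp hx hy
  obtain ⟨m, hm, hsub⟩ := hch.exists_maxChain
  haveI := hwo hm.1
  -- inject Iio t into the proper initial segment of m below ⟨t, _⟩
  have htm : t ∈ m := hsub (Set.self_mem_Iic)
  have hinj : Function.Injective
      (fun x : ↥(Set.Iio t) => (⟨⟨(x : A), hsub (le_of_lt x.2)⟩, x.2⟩ :
        {y : ↥m // (y : A) < ((⟨t, htm⟩ : ↥m) : A)})) := by
    intro x y h
    exact Subtype.ext (Subtype.mk_eq_mk.mp (Subtype.mk_eq_mk.mp h))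
  have h1 : #↥(Set.Iio t) ≤ #{y : ↥m // (y : A) < ((⟨t, htm⟩ : ↥m) : A)} :=
    Cardinal.mk_le_of_injective hinj
  have h2 := Ordinal.card_typein (r := fun x y : ↥m => (x : A) < (y : A)) ⟨t, htm⟩
  have h3 := Ordinal.typein_lt_type (fun x y : ↥m => (x : A) < (y : A)) ⟨t, htm⟩
  rw [branch_type hcmp hwo hbr hm] at h3
  have h4 := Cardinal.lt_ord.mp h3
  exact lt_of_le_of_lt (h1.trans_eq h2) h4

lemma iic_small (hA0 : ℵ₀ ≤ #A) (t : A) : #↥(Set.Iic t) < #A := by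
  have : #↥(Set.Iic t) ≤ #↥(Set.Iio t) + 1 := by
    rw [← Set.Iio_insert]; exact Cardinal.mk_insert_le
  exact lt_of_le_of_lt this
    (Cardinal.add_lt_of_lt hA0 (iio_small hcmp hwo hbr t) (lt_of_lt_of_le Cardinal.one_lt_aleph0 hA0))

/-- any small chain has an upper bound avoiding any small set -/
lemma exists_above (hreg : (#A).IsRegular) {Z B : Set A}
    (hZ : IsChain (· ≤ ·) Z) (hZc : #↥Z < #A) (hB : #↥B < #A) :
    ∃ x, x ∉ B ∧ ∀ z ∈ Z, z < x := by
  obtain ⟨m, hm, hsub⟩ := hZ.exists_maxChain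
  set D : Set A := (⋃ z : ↥Z, Set.Iic (z : A)) ∪ B with hD
  have hDc : #↥D < #A := by
    apply Cardinal.add_lt_of_lt hreg.aleph0_le ?_ hB |>.trans_le'
      (Cardinal.mk_union_le _ _)
    apply lt_of_le_of_lt (Cardinal.mk_iUnion_le _)
    apply Cardinal.mul_lt_of_lt hreg.aleph0_le hZc
    exact Cardinal.iSup_lt_of_isRegular hreg hZc
      (fun z => iic_small hcmp hwo hbr hreg.aleph0_le (z : A))
  have hmD : ¬ (m ⊆ D) := by
    intro hmd
    exact absurd (Cardinal.mk_le_mk_of_subset hmd)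
      (by rw [branch_card hcmp hwo hbr hm]; exact not_le.mpr hDc)
  obtain ⟨x, hxm, hxD⟩ := Set.not_subset.mp hmD
  refine ⟨x, fun h => hxD (Or.inr h), ?_⟩
  intro z hz
  have hzm : z ∈ m := hsub hz
  have hnle : ¬ (x ≤ z) := by
    intro h
    exact hxD (Or.inl (Set.mem_iUnion.mpr ⟨⟨z, hz⟩, h⟩))
  by_cases hxz : x = z
  · exact absurd (le_of_eq hxz) hnle
  rcases hm.1 hzm hxm (fun h => hxz h.symm) with h | h
  · exact lt_of_le_of_ne h (fun h' => hxz h'.symm)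
  · exact absurd h hnle
end X
lemma O_iio_small {κ : Cardinal.{u}} (γ : κ.ord.ToType) :
    #↥(Set.Iio γ) < κ := by
  haveI : IsWellOrder κ.ord.ToType (· < ·) := isWellOrder_lt
  have h2 := Ordinal.card_typein (r := ((· < ·) : κ.ord.ToType → κ.ord.ToType → Prop)) γ
  have h3 := Ordinal.typein_lt_type ((· < ·) : κ.ord.ToType → κ.ord.ToType → Prop) γ
  rw [Ordinal.type_toType] at h3
  have h4 := Cardinal.lt_ord.mp h3
  have : #↥(Set.Iio γ) = #{y : κ.ord.ToType // y < γ} := rfl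
  rw [this, ← h2]; exact h4

lemma O_iic_small {κ : Cardinal.{u}} (hκ : ℵ₀ ≤ κ) (γ : κ.ord.ToType) :
    #↥(Set.Iic γ) < κ := by
  have : #↥(Set.Iic γ) ≤ #↥(Set.Iio γ) + 1 := by
    rw [← Set.Iio_insert]; exact Cardinal.mk_insert_le
  exact lt_of_le_of_lt this
    (Cardinal.add_lt_of_lt hκ (O_iio_small γ) (lt_of_lt_of_le Cardinal.one_lt_aleph0 hκ))

/-- Linear extension of type κ of any κ-sized subset with small down-sets. -/
lemma exists_linext (hreg : (#A).IsRegular)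
    (hmono : ∀ {a b : A}, a < b → treeHt a < treeHt b)
    (hiic : ∀ t : A, #↥(Set.Iic t) < #A)
    (P : Set A) (hP : #↥P = #A) :
    ∃ φ : ↥P ≃ (#A).ord.ToType, ∀ a b : ↥P, (a : A) < (b : A) → φ a < φ b := by
  set κ := #A with hκdef
  set O := κ.ord.ToType with hOdef
  have hOcard : #O = κ := mk_ord_toType κ
  obtain ⟨e⟩ : Nonempty (O ≃ ↥P) := Cardinal.eq.mp (hOcard.trans hP.symm)
  have hwfO : WellFounded ((· < ·) : O → O → Prop) := wellFounded_lt
  set stage : ↥P → O := fun a =>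
    hwfO.min {γ : O | (a : A) ≤ ((e γ : ↥P) : A)} ⟨e.symm a, by simp⟩ with hstage
  have stage_mem : ∀ a : ↥P, (a : A) ≤ ((e (stage a) : ↥P) : A) := fun a =>
    hwfO.min_mem {γ : O | (a : A) ≤ ((e γ : ↥P) : A)} ⟨e.symm a, by simp⟩
  have stage_mono : ∀ {a b : ↥P}, (a : A) ≤ (b : A) → stage a ≤ stage b := by
    intro a b h
    have hmem : stage b ∈ {γ : O | (a : A) ≤ ((e γ : ↥P) : A)} :=
      le_trans h (stage_mem b)
    exact le_of_not_gt (hwfO.not_lt_min _ hmem)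
  set μ : ↥P → ((O ×ₗ Ordinal.{u}) ×ₗ O) := fun a =>
    toLex (toLex (stage a, treeHt (a : A)), e.symm a) with hμ
  have μinj : Function.Injective μ := by
    intro a b h
    have h2 : (ofLex (μ a)).2 = (ofLex (μ b)).2 := by rw [h]
    simpa using e.symm.injective h2
  set r : ↥P → ↥P → Prop := fun a b => μ a < μ b with hr
  haveI hwor : IsWellOrder ↥P r := by
    have htri : ∀ a b : ↥P, r a b ∨ a = b ∨ r b a := by
      intro a b
      rcases lt_trichotomy (μ a) (μ b) with h | h | h
      · exact Or.inl h
      · exact Or.inr (Or.inl (μinj h))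
      · exact Or.inr (Or.inr h)
    exact { wf := InvImage.wf μ wellFounded_lt,
            trichotomous := fun a b h1 h2 => ((htri a b).resolve_left h1).resolve_right h2 }
  have hiff : ∀ a b : ↥P, r a b ↔
      ((stage a < stage b ∨ (stage a = stage b ∧ treeHt (a : A) < treeHt (b : A))) ∨
        ((stage a = stage b ∧ treeHt (a : A) = treeHt (b : A)) ∧ e.symm a < e.symm b)) := by
    intro a b
    show toLex (toLex (stage a, treeHt (a : A)), e.symm a) <
      toLex (toLex (stage b, treeHt (b : A)), e.symm b) ↔ _
    simp only [Prod.Lex.lt_iff, ofLex_toLex, toLex_inj, Prod.mk.injEq]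
  have rstage : ∀ {a x : ↥P}, r a x → stage a ≤ stage x := by
    intro a x h
    rcases (hiff a x).mp h with (h | ⟨h, _⟩) | ⟨⟨h, _⟩, _⟩
    · exact le_of_lt h
    · exact le_of_eq h
    · exact le_of_eq h
  have rmono : ∀ {a b : ↥P}, (a : A) < (b : A) → r a b := by
    intro a b h
    apply (hiff a b).mpr
    rcases lt_or_eq_of_le (stage_mono (le_of_lt h)) with hs | hs
    · exact Or.inl (Or.inl hs)
    · exact Or.inl (Or.inr ⟨hs, hmono h⟩)
  -- initial segments are small
  have key : ∀ x : ↥P, #{a : ↥P // r a x} < κ := by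
    intro x
    set U : Set ↥P :=
      ⋃ γ : ↥(Set.Iic (stage x)), {a : ↥P | (a : A) ≤ ((e (γ : O) : ↥P) : A)} with hU
    have hsub : ∀ a : {a : ↥P // r a x}, (a : ↥P) ∈ U := by
      intro a
      refine Set.mem_iUnion.mpr ⟨⟨stage (a : ↥P), rstage a.2⟩, stage_mem _⟩
    have h1 : #{a : ↥P // r a x} ≤ #↥U :=
      Cardinal.mk_le_of_injective (f := fun a => (⟨(a : ↥P), hsub a⟩ : ↥U))
        (fun a b h => Subtype.ext (Subtype.mk_eq_mk.mp h))
    have h2 : #↥U < κ := by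
      apply lt_of_le_of_lt (Cardinal.mk_iUnion_le _)
      have hidx : #↥(Set.Iic (stage x)) < κ := O_iic_small hreg.aleph0_le _
      apply Cardinal.mul_lt_of_lt hreg.aleph0_le hidx
      apply Cardinal.iSup_lt_of_isRegular hreg hidx
      intro γ
      have : #↥{a : ↥P | (a : A) ≤ ((e (γ : O) : ↥P) : A)} ≤
          #↥(Set.Iic ((e (γ : O) : ↥P) : A)) :=
        Cardinal.mk_le_of_injective
          (f := fun a => (⟨((a : ↥P) : A), a.2⟩ : ↥(Set.Iic ((e (γ : O) : ↥P) : A))))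
          (fun a b h => Subtype.ext (Subtype.ext (Subtype.mk_eq_mk.mp h)))
      exact lt_of_le_of_lt this (hiic _)
    exact lt_of_le_of_lt h1 h2
  -- the type of r is exactly κ
  haveI : IsWellOrder O (· < ·) := isWellOrder_lt
  have hle : Ordinal.type r ≤ κ.ord := by
    by_contra hcon
    push_neg at hcon
    obtain ⟨x, hx⟩ := Ordinal.typein_surj r hcon
    have hc := Ordinal.card_typein (r := r) x
    rw [hx] at hc
    rw [Cardinal.card_ord] at hc
    exact absurd hc (ne_of_lt (key x)).symm
  have hge : κ.ord ≤ Ordinal.type r := by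
    rw [Cardinal.ord_le, Ordinal.card_type]
    exact le_of_eq hP.symm
  have htype : Ordinal.type r = Ordinal.type ((· < ·) : O → O → Prop) := by
    rw [Ordinal.type_toType]
    exact le_antisymm hle hge
  obtain ⟨ψ⟩ := Ordinal.type_eq.mp htype
  exact ⟨ψ.toEquiv, fun a b h => ψ.map_rel_iff.mpr (rmono h)⟩
/-- Partition of A into κ chains, each enumerated in type κ. -/
lemma exists_theta (hreg : (#A).IsRegular)
    (hup : ∀ Z B : Set A, IsChain (· ≤ ·) Z → #↥Z < #A → #↥B < #A →
      ∃ x, x ∉ B ∧ ∀ z ∈ Z, z < x) :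
    ∃ θ : (#A).ord.ToType → (#A).ord.ToType → A,
      (∀ α : (#A).ord.ToType, ∀ x y : (#A).ord.ToType, x < y → θ α x < θ α y) ∧
      Function.Bijective (fun p : (#A).ord.ToType × (#A).ord.ToType => θ p.1 p.2) := by
  classical
  set κ := #A with hκ
  set O := κ.ord.ToType with hO
  haveI hOwo : IsWellOrder O (· < ·) := isWellOrder_lt
  have hOcard : #O = κ := mk_ord_toType κ
  haveI hONe : Nonempty O := by
    rw [Ordinal.toType_nonempty_iff_ne_zero]
    intro h
    have h2 := congrArg Ordinal.card h
    rw [Cardinal.card_ord] at h2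
    simp only [Ordinal.card_zero] at h2
    have h3 : ℵ₀ ≤ (0 : Cardinal.{u}) := h2 ▸ hreg.aleph0_le
    exact Cardinal.aleph0_ne_zero (by simpa using h3)
  obtain ⟨e⟩ : Nonempty (O ≃ A) := Cardinal.eq.mp hOcard
  obtain ⟨pr⟩ : Nonempty (O ≃ O × O) := by
    apply Cardinal.eq.mp
    rw [Cardinal.mk_prod, Cardinal.lift_id, hOcard,
      Cardinal.mul_eq_self hreg.aleph0_le]
  have hwf : WellFounded ((· < ·) : O → O → Prop) := wellFounded_lt
  set step : (o : O) → ((o' : O) → o' < o → A) → A := fun o IH =>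
    if h : ∃ γ : O, e γ ∈ ({x | (∀ o' (h' : o' < o), IH o' h' ≠ x) ∧
        (∀ o' (h' : o' < o), (pr o').1 = (pr o).1 → IH o' h' < x)} : Set A)
    then e (hwf.min {γ : O | e γ ∈ ({x | (∀ o' (h' : o' < o), IH o' h' ≠ x) ∧
        (∀ o' (h' : o' < o), (pr o').1 = (pr o).1 → IH o' h' < x)} : Set A)} h)
    else e (Classical.arbitrary O) with hstep
  set F : O → A := hwf.fix step with hF
  have hFeq : ∀ o : O, F o = step o (fun o' _ => F o') := by
    intro o
    rw [hF]
    exact hwf.fix_eq step o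
  set VS : O → Set A := fun o => {x | (∀ o' (h' : o' < o), F o' ≠ x) ∧
      (∀ o' (h' : o' < o), (pr o').1 = (pr o).1 → F o' < x)} with hVS
  have hFdef : ∀ o : O, (h : ∃ γ : O, e γ ∈ VS o) →
      F o = e (hwf.min {γ : O | e γ ∈ VS o} h) := by
    intro o h
    rw [hFeq o]
    exact dif_pos h
  have key : ∀ o : O, F o ∈ VS o := by
    intro o
    induction o using hwf.induction with
    | _ o IH =>
    have hZchain : IsChain (· ≤ ·)
        {x | ∃ o', ∃ _ : o' < o, (pr o').1 = (pr o).1 ∧ F o' = x} := by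
      rintro x ⟨o1, h1, hc1, rfl⟩ y ⟨o2, h2, hc2, rfl⟩ hxy
      rcases lt_trichotomy o1 o2 with h | h | h
      · exact Or.inl (le_of_lt ((IH o2 h2).2 o1 h (hc1.trans hc2.symm)))
      · exact absurd (congrArg F h) hxy
      · exact Or.inr (le_of_lt ((IH o1 h1).2 o2 h (hc2.trans hc1.symm)))
    have hBsmall : #↥{x | ∃ o', ∃ _ : o' < o, F o' = x} < κ := by
      have hsub : {x | ∃ o', ∃ _ : o' < o, F o' = x} ⊆
          Set.range (fun p : {o' : O // o' < o} => F p.1) := by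
        rintro x ⟨o', h', rfl⟩; exact ⟨⟨o', h'⟩, rfl⟩
      apply lt_of_le_of_lt (Cardinal.mk_le_mk_of_subset hsub)
      apply lt_of_le_of_lt Cardinal.mk_range_le
      exact O_iio_small o
    have hZsmall : #↥{x | ∃ o', ∃ _ : o' < o, (pr o').1 = (pr o).1 ∧ F o' = x} < κ := by
      refine lt_of_le_of_lt (Cardinal.mk_le_mk_of_subset ?_) hBsmall
      rintro x ⟨o', h', _, rfl⟩; exact ⟨o', h', rfl⟩
    obtain ⟨x, hxB, hxZ⟩ := hup _ _ hZchain hZsmall hBsmall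
    have hxV : x ∈ VS o := by
      constructor
      · intro o' h' hne; exact hxB ⟨o', h', hne⟩
      · intro o' h' hc; exact hxZ _ ⟨o', h', hc, rfl⟩
    have hne : ∃ γ : O, e γ ∈ VS o := ⟨e.symm x, by simpa using hxV⟩
    rw [hFdef o hne]
    exact hwf.min_mem {γ : O | e γ ∈ VS o} hne
  have hFmono : ∀ {o1 o2 : O}, o1 < o2 → (pr o1).1 = (pr o2).1 → F o1 < F o2 :=
    fun h hc => (key _).2 _ h hc
  have hFinj : Function.Injective F := by
    intro o1 o2 h
    rcases lt_trichotomy o1 o2 with hl | he | hl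
    · exact absurd h ((key o2).1 o1 hl)
    · exact he
    · exact absurd h.symm ((key o1).1 o2 hl)
  have hFsurj : Function.Surjective F := by
    by_contra hcon
    rw [Function.Surjective] at hcon
    push_neg at hcon
    obtain ⟨t, ht⟩ := hcon
    set oOf : O → O := fun α => hwf.min {o : O | (pr o).1 = α}
      ⟨pr.symm (α, α), by simp⟩ with hoOf
    have hoOf_mem : ∀ α, (pr (oOf α)).1 = α := fun α =>
      hwf.min_mem {o : O | (pr o).1 = α} ⟨pr.symm (α, α), by simp⟩
    have hVt : ∀ α, e (e.symm t) ∈ VS (oOf α) := by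
      intro α
      constructor
      · intro o' h' hh
        rw [Equiv.apply_symm_apply] at hh
        exact ht o' hh
      · intro o' h' hc
        refine absurd h' (hwf.not_lt_min {o : O | (pr o).1 = α} ?_)
        rw [Set.mem_setOf_eq, hc, hoOf_mem α]
    have hle : ∀ α, e.symm (F (oOf α)) ≤ e.symm t := by
      intro α
      rw [hFdef _ ⟨e.symm t, hVt α⟩]
      rw [Equiv.symm_apply_apply]
      exact le_of_not_gt (hwf.not_lt_min _ (hVt α))
    have hInj2 : Function.Injective
        (fun α : O => (⟨e.symm (F (oOf α)), hle α⟩ : ↥(Set.Iic (e.symm t)))) := by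
      intro α β h
      have h2 : F (oOf α) = F (oOf β) := e.symm.injective (Subtype.mk_eq_mk.mp h)
      have h3 := hFinj h2
      rw [← hoOf_mem α, ← hoOf_mem β, h3]
    have hLL : #O ≤ #↥(Set.Iic (e.symm t)) := Cardinal.mk_le_of_injective hInj2
    rw [hOcard] at hLL
    exact absurd hLL (not_le.mpr (O_iic_small hreg.aleph0_le _))
  -- order isomorphism from O onto each coordinate class
  have hSiso : ∀ α : O, Nonempty (((· < ·) : O → O → Prop) ≃r
      (fun x y : {o : O // (pr o).1 = α} => (x : O) < (y : O))) := by
    intro α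
    have emb : (fun x y : {o : O // (pr o).1 = α} => (x : O) < (y : O)) ↪r
        ((· < ·) : O → O → Prop) := by
      refine ⟨⟨fun x => (x : O), fun x y h => Subtype.ext h⟩, Iff.rfl⟩
    haveI hwoS := RelEmbedding.isWellOrder emb
    apply Ordinal.type_eq.mp
    have hle2 : Ordinal.type (fun x y : {o : O // (pr o).1 = α} => (x : O) < (y : O)) ≤
        Ordinal.type ((· < ·) : O → O → Prop) := RelEmbedding.ordinal_type_le emb
    rw [Ordinal.type_toType] at hle2
    have heq : #{o : O // (pr o).1 = α} = κ := by
      have : Nonempty (O ≃ {o : O // (pr o).1 = α}) := by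
        refine ⟨⟨fun β => ⟨pr.symm (α, β), by simp⟩, fun o => (pr (o : O)).2, ?_, ?_⟩⟩
        · intro β; simp
        · intro o
          apply Subtype.ext
          show pr.symm ((α, (pr (o : O)).2)) = (o : O)
          have hpair : (α, (pr (o : O)).2) = pr (o : O) :=
            Prod.ext_iff.mpr ⟨o.2.symm, rfl⟩
          rw [hpair, pr.symm_apply_apply]
      rw [← hOcard]
      exact (Cardinal.eq.mpr this).symm
    have hge2 : κ.ord ≤ Ordinal.type
        (fun x y : {o : O // (pr o).1 = α} => (x : O) < (y : O)) := by
      rw [Cardinal.ord_le, Ordinal.card_type, heq]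
    rw [Ordinal.type_toType]
    exact (le_antisymm hle2 hge2).symm
  set ψ : ∀ α : O, ((· < ·) : O → O → Prop) ≃r
      (fun x y : {o : O // (pr o).1 = α} => (x : O) < (y : O)) :=
    fun α => Classical.choice (hSiso α) with hψ
  refine ⟨fun α x => F ((ψ α x : {o : O // (pr o).1 = α}) : O), ?_, ?_⟩
  · intro α x y h
    exact hFmono ((ψ α).map_rel_iff.mpr h) (((ψ α x).2).trans ((ψ α y).2).symm)
  · constructor
    · intro p q h
      have h2 : ((ψ p.1 p.2 : {o : O // (pr o).1 = p.1}) : O) =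
          ((ψ q.1 q.2 : {o : O // (pr o).1 = q.1}) : O) := hFinj h
      have h1 : p.1 = q.1 := by
        rw [← (ψ p.1 p.2).2, ← (ψ q.1 q.2).2, h2]
      obtain ⟨p1, p2⟩ := p
      obtain ⟨q1, q2⟩ := q
      cases h1
      have h3 : ψ p1 p2 = ψ p1 q2 := Subtype.ext h2
      have h4 : p2 = q2 := (ψ p1).toEquiv.injective h3
      rw [h4]
    · intro t
      obtain ⟨o, rfl⟩ := hFsurj t
      refine ⟨((pr o).1, (ψ (pr o).1).toEquiv.symm ⟨o, rfl⟩), ?_⟩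
      show F _ = F o
      congr 1
      show (((ψ (pr o).1) ((ψ (pr o).1).toEquiv.symm ⟨o, rfl⟩) :
        {x : O // (pr x).1 = (pr o).1}) : O) = o
      rw [show (ψ (pr o).1) ((ψ (pr o).1).toEquiv.symm ⟨o, rfl⟩) =
        (ψ (pr o).1).toEquiv ((ψ (pr o).1).toEquiv.symm ⟨o, rfl⟩) from rfl]
      rw [Equiv.apply_symm_apply]

end StmtAux

/-- If a tree `T` has a node `N` and a nonempty `S ⊆ N` such that the
tree `S↑` (with the induced order) is bad, then `T` is not reversible. -/
theorem stmt4 {T : Type u} [PartialOrder T] (hT : IsTree T)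
    (N : Set T) (hN : IsNode N) (S : Set T) (hSN : S ⊆ N) (hS : S.Nonempty)
    (hbad : IsBad ↥(upClo S)) :
    ¬ Reversible T := by
  classical
  open StmtAux Cardinal in
  intro hrev
  set A := ↥(upClo S) with hAdef
  have hA : IsTree A := isTree_subtype hT _
  obtain ⟨hreg, hheight, hlevel, hbranch⟩ := hbad
  have hcmp : ∀ {t x y : A}, x ≤ t → y ≤ t → x ≤ y ∨ y ≤ x :=
    fun hx hy => iic_cmp hA hx hy
  have hwo : ∀ {m : Set A}, IsChain (· ≤ ·) m →
      IsWellOrder ↥m (fun x y : ↥m => (x : A) < (y : A)) :=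
    fun hm => chain_isWellOrder hA hm
  have hbr : ∀ m : Set A, IsMaxChain (· ≤ ·) m → chainHt m = (#A).ord :=
    fun m hm => (hbranch m hm).trans hheight
  have hup : ∀ Z B : Set A, IsChain (· ≤ ·) Z → #↥Z < #A → #↥B < #A →
      ∃ x, x ∉ B ∧ ∀ z ∈ Z, z < x :=
    fun Z B hZ hZc hB => exists_above hcmp hwo hbr hreg hZ hZc hB
  have hiic : ∀ t : A, #↥(Set.Iic t) < #A :=
    iic_small hcmp hwo hbr hreg.aleph0_le
  have hmono : ∀ {a b : A}, a < b → treeHt a < treeHt b := fun h => treeHt_lt hA h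
  obtain ⟨θ, θmono, θbij⟩ := exists_theta hreg hup
  -- roots
  have hwfA : WellFounded ((· < ·) : A → A → Prop) := tree_lt_wf hA
  set root : A → A := fun t => hwfA.min (Set.Iic t) ⟨t, le_refl t⟩ with hrootdef
  have root_le : ∀ t, root t ≤ t := fun t => hwfA.min_mem (Set.Iic t) ⟨t, le_refl t⟩
  have root_min : ∀ t x, ¬ x < root t := by
    intro t x hx
    exact hwfA.not_lt_min (Set.Iic t) (le_trans hx.le (root_le t)) hx
  have root_eq : ∀ {s t : A}, s ≤ t → root s = root t := by
    intro s t h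
    have h1 : root s ≤ t := le_trans (root_le s) h
    have h2 : root t ≤ t := root_le t
    rcases hcmp h1 h2 with hc | hc
    · rcases eq_or_lt_of_le hc with he | hl
      · exact he
      · exact absurd hl (root_min t _)
    · rcases eq_or_lt_of_le hc with he | hl
      · exact he.symm
      · exact absurd hl (root_min s _)
  have root_self : ∀ r : A, (∀ x, ¬ x < r) → root r = r := by
    intro r hr
    rcases eq_or_lt_of_le (root_le r) with he | hl
    · exact he
    · exact absurd hl (hr _)
  -- minimal elements
  set Min : Set A := {t : A | ∀ x, ¬ x < t} with hMindef
  have hMineq : level A 0 = Min := by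
    ext t
    show treeHt t = 0 ↔ _
    rw [treeHt_eq hA t]
    haveI := hA t
    rw [Ordinal.type_eq_zero_iff_isEmpty, isEmpty_subtype]
    exact Iff.rfl
  have hMincard : #↥Min = #A := by rw [← hMineq]; exact hlevel
  have hMin2 : ∃ r0 r1 : ↥Min, r0 ≠ r1 := by
    have h1 : 1 < #↥Min := by
      rw [hMincard]
      exact lt_of_lt_of_le Cardinal.one_lt_aleph0 hreg.aleph0_le
    haveI := Cardinal.one_lt_iff_nontrivial.mp h1
    obtain ⟨a, b, hab⟩ := exists_pair_ne ↥Min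
    exact ⟨a, b, hab⟩
  obtain ⟨r0', r1', hr01'⟩ := hMin2
  set r0 : A := (r0' : A) with hr0def
  set r1 : A := (r1' : A) with hr1def
  have hr0min : ∀ x, ¬ x < r0 := r0'.2
  have hr1min : ∀ x, ¬ x < r1 := r1'.2
  have hr01 : r0 ≠ r1 := fun h => hr01' (Subtype.ext h)
  -- cones have full size
  have cone_card : ∀ r : A, (∀ x, ¬ x < r) → #↥{t : A | root t = r} = #A := by
    intro r hr
    have hch : IsChain (· ≤ ·) ({r} : Set A) := by
      intro x hx y hy hne
      rw [Set.mem_singleton_iff] at hx hy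
      exact absurd (hx.trans hy.symm) hne
    obtain ⟨m, hm, hsub⟩ := hch.exists_maxChain
    have hrm : r ∈ m := hsub rfl
    have hsubm : m ⊆ {t : A | root t = r} := by
      intro x hx
      have h1 : r ≤ x := by
        by_cases hxr : x = r
        · exact le_of_eq hxr.symm
        rcases hm.1 hrm hx (fun h => hxr h.symm) with h | h
        · exact h
        · rcases eq_or_lt_of_le h with he | hl
          · exact le_of_eq he.symm
          · exact absurd hl (hr x)
      show root x = r
      rw [← root_eq h1, root_self r hr]
    refine le_antisymm (Cardinal.mk_set_le _) ?_
    calc #A = #↥m := (branch_card hcmp hwo hbr hm).symm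
    _ ≤ _ := Cardinal.mk_le_mk_of_subset hsubm
  -- grouped roots: merge the cone of r1 into the cone of r0
  set gr : A → A := fun t => if root t = r1 then r0 else root t with hgrdef
  have gr_prop : ∀ t : A, (∀ x, ¬ x < gr t) ∧ gr t ≠ r1 := by
    intro t
    show ((∀ x, ¬ x < if root t = r1 then r0 else root t) ∧
      (if root t = r1 then r0 else root t) ≠ r1)
    by_cases h : root t = r1
    · rw [if_pos h]; exact ⟨hr0min, hr01⟩
    · rw [if_neg h]; exact ⟨fun x => root_min t x, h⟩
  have gr_eq : ∀ {s t : A}, s ≤ t → gr s = gr t := by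
    intro s t h
    show (if root s = r1 then r0 else root s) = (if root t = r1 then r0 else root t)
    rw [root_eq h]
  set Msub : Set A := {r : A | (∀ x, ¬ x < r) ∧ r ≠ r1} with hMsubdef
  have hMsubcard : #↥Msub = #A := by
    have hsub : Min ⊆ insert r1 Msub := by
      intro x hx
      by_cases hxr : x = r1
      · exact Or.inl hxr
      · exact Or.inr ⟨hx, hxr⟩
    refine le_antisymm (Cardinal.mk_set_le _) ?_
    by_contra hcon
    push_neg at hcon
    have h1 : #↥Min ≤ #↥Msub + 1 :=
      le_trans (Cardinal.mk_le_mk_of_subset hsub) Cardinal.mk_insert_le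
    rw [hMincard] at h1
    exact absurd h1 (not_le.mpr (Cardinal.add_lt_of_lt hreg.aleph0_le hcon
      (lt_of_lt_of_le Cardinal.one_lt_aleph0 hreg.aleph0_le)))
  obtain ⟨q⟩ : Nonempty (↥Msub ≃ (#A).ord.ToType) :=
    Cardinal.eq.mp (hMsubcard.trans (Cardinal.mk_ord_toType (#A)).symm)
  -- linear extensions of the grouped cones
  have hplin : ∀ i : ↥Msub, ∃ φ : ↥{t : A | gr t = (i : A)} ≃ (#A).ord.ToType,
      ∀ a b : ↥{t : A | gr t = (i : A)}, (a : A) < (b : A) → φ a < φ b := by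
    intro i
    apply exists_linext hreg hmono hiic
    have hsub : {t : A | root t = (i : A)} ⊆ {t : A | gr t = (i : A)} := by
      intro t ht
      show (if root t = r1 then r0 else root t) = (i : A)
      rw [Set.mem_setOf_eq] at ht
      have : root t ≠ r1 := by rw [ht]; exact i.2.2
      rw [if_neg this, ht]
    refine le_antisymm (Cardinal.mk_set_le _) ?_
    calc #A = #↥{t : A | root t = (i : A)} := (cone_card (i : A) i.2.1).symm
    _ ≤ _ := Cardinal.mk_le_mk_of_subset hsub
  choose φ φmono using hplin
  -- the inner condensation G of A
  set idx : A → ↥Msub := fun t => ⟨gr t, gr_prop t⟩ with hidxdef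
  set G : A → A := fun t => θ (q (idx t)) (φ (idx t) ⟨t, rfl⟩) with hGdef
  have Gval : ∀ (t : A) (j : ↥Msub) (hj : gr t = (j : A)),
      G t = θ (q j) (φ j ⟨t, hj⟩) := by
    intro t j hj
    have hi : idx t = j := Subtype.ext hj
    subst hi
    rfl
  have Gmono : ∀ {s t : A}, s < t → G s < G t := by
    intro s t h
    have hgr : gr s = gr t := gr_eq h.le
    rw [Gval s (idx t) hgr, Gval t (idx t) rfl]
    exact θmono _ _ _ (φmono (idx t) ⟨s, hgr⟩ ⟨t, rfl⟩ h)
  have Ginj : Function.Injective G := by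
    intro s t h
    have hpair : ((q (idx s), φ (idx s) ⟨s, rfl⟩) : _ × _) =
        (q (idx t), φ (idx t) ⟨t, rfl⟩) := θbij.1 h
    have h1 : q (idx s) = q (idx t) := congrArg Prod.fst hpair
    have hj : idx s = idx t := q.injective h1
    have h2 := congrArg Prod.snd hpair
    have φval : ∀ (i j : ↥Msub) (hij : i = j) (u : A) (hu : gr u = (i : A)),
        φ i ⟨u, hu⟩ = φ j ⟨u, hij ▸ hu⟩ := by
      intro i j hij u hu
      subst hij
      rfl
    have h3 := φval (idx s) (idx t) hj s rfl
    rw [h3] at h2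
    have h4 := (φ (idx t)).injective h2
    exact Subtype.mk_eq_mk.mp h4
  have Gsurj : Function.Surjective G := by
    intro t
    obtain ⟨p, hp⟩ := θbij.2 t
    set j : ↥Msub := q.symm p.1 with hjdef
    set x : ↥{u : A | gr u = (j : A)} := (φ j).symm p.2 with hxdef
    refine ⟨(x : A), ?_⟩
    have hx : gr (x : A) = (j : A) := x.2
    rw [Gval (x : A) j hx]
    have heta : (⟨(x : A), hx⟩ : ↥{u : A | gr u = (j : A)}) = x := Subtype.ext rfl
    rw [heta, Equiv.apply_symm_apply, Equiv.apply_symm_apply]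
    exact hp
  -- the violated pair
  have hgr0 : gr r0 = r0 := by
    show (if root r0 = r1 then r0 else root r0) = r0
    rw [root_self r0 hr0min, if_neg hr01]
  have hgr1 : gr r1 = r0 := by
    show (if root r1 = r1 then r0 else root r1) = r0
    rw [root_self r1 hr1min, if_pos rfl]
  set j0 : ↥Msub := ⟨r0, hr0min, hr01⟩ with hj0def
  have hG0 : G r0 = θ (q j0) (φ j0 ⟨r0, hgr0⟩) := Gval r0 j0 hgr0
  have hG1 : G r1 = θ (q j0) (φ j0 ⟨r1, hgr1⟩) := Gval r1 j0 hgr1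
  have hxne : φ j0 ⟨r0, hgr0⟩ ≠ φ j0 ⟨r1, hgr1⟩ := by
    intro h
    exact hr01 (Subtype.mk_eq_mk.mp ((φ j0).injective h))
  have hviol : G r0 < G r1 ∨ G r1 < G r0 := by
    rcases lt_trichotomy (φ j0 ⟨r0, hgr0⟩) (φ j0 ⟨r1, hgr1⟩) with h | h | h
    · left; rw [hG0, hG1]; exact θmono _ _ _ h
    · exact absurd h hxne
    · right; rw [hG0, hG1]; exact θmono _ _ _ h
  -- lift G to a condensation f of T
  set f : T → T := fun x => if h : x ∈ upClo S then ((G ⟨x, h⟩ : A) : T) else x with hfdef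
  have hfin : ∀ (x : T) (h : x ∈ upClo S), f x = ((G ⟨x, h⟩ : A) : T) :=
    fun x h => dif_pos h
  have hfout : ∀ (x : T), x ∉ upClo S → f x = x := fun x h => dif_neg h
  have hupward : ∀ {x y : T}, x ∈ upClo S → x ≤ y → y ∈ upClo S := by
    rintro x y ⟨u, huS, hux⟩ hxy
    exact ⟨u, huS, hux.trans hxy⟩
  -- key node fact
  have hnode : ∀ {x y : T}, x ∉ upClo S → y ∈ upClo S → x < y →
      ∀ z : T, z ∈ upClo S → x < z := by
    intro x y hx hy hxy z hz
    obtain ⟨u, huS, huy⟩ := hy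
    have hxu : x < u := by
      rcases eq_or_lt_of_le huy with he | hl
      · rw [he]; exact hxy
      · rcases iio_cmp hT hxy hl with h | h | h
        · exact h
        · exact absurd ⟨u, huS, le_of_eq h.symm⟩ hx
        · exact absurd ⟨u, huS, h.le⟩ hx
    obtain ⟨t₀, hNt⟩ := hN
    have hIu : Set.Iio u = Set.Iio t₀ := by
      have := hSN huS
      rwa [hNt] at this
    obtain ⟨u', hu'S, hu'z⟩ := hz
    have hIu' : Set.Iio u' = Set.Iio t₀ := by
      have := hSN hu'S
      rwa [hNt] at this
    have hxu' : x < u' := by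
      have hxmem : x ∈ Set.Iio u := hxu
      rw [hIu, ← hIu'] at hxmem
      exact hxmem
    exact lt_of_lt_of_le hxu' hu'z
  -- f is a condensation
  have hfbij : Function.Bijective f := by
    constructor
    · intro x y h
      by_cases hx : x ∈ upClo S <;> by_cases hy : y ∈ upClo S
      · rw [hfin x hx, hfin y hy] at h
        have := Ginj (Subtype.ext h)
        exact Subtype.mk_eq_mk.mp this
      · rw [hfin x hx, hfout y hy] at h
        exact absurd (h ▸ (G ⟨x, hx⟩).2) hy
      · rw [hfout x hx, hfin y hy] at h
        exact absurd (h ▸ (G ⟨y, hy⟩).2) hx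
      · rw [hfout x hx, hfout y hy] at h
        exact h
    · intro y
      by_cases hy : y ∈ upClo S
      · obtain ⟨a, ha⟩ := Gsurj ⟨y, hy⟩
        refine ⟨(a : T), ?_⟩
        rw [hfin (a : T) a.2]
        have heta : (⟨(a : T), a.2⟩ : A) = a := Subtype.ext rfl
        rw [heta, ha]
      · exact ⟨y, hfout y hy⟩
  have hfmono : ∀ s t : T, s < t → f s < f t := by
    intro s t hst
    by_cases hs : s ∈ upClo S
    · have ht : t ∈ upClo S := hupward hs hst.le
      rw [hfin s hs, hfin t ht]
      have : (⟨s, hs⟩ : A) < ⟨t, ht⟩ := Subtype.mk_lt_mk.mpr hst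
      exact Subtype.coe_lt_coe.mpr (Gmono this)
    · by_cases ht : t ∈ upClo S
      · rw [hfout s hs, hfin t ht]
        exact hnode hs ht hst _ (G ⟨t, ht⟩).2
      · rw [hfout s hs, hfout t ht]
        exact hst
  have hauto := hrev f ⟨hfbij, hfmono⟩
  -- derive the contradiction
  have hfr : ∀ r : A, f (r : T) = ((G r : A) : T) := by
    intro r
    rw [hfin (r : T) r.2]
  rcases hviol with h | h
  · have h2 : f (r0 : T) < f (r1 : T) := by
      rw [hfr r0, hfr r1]
      exact Subtype.coe_lt_coe.mpr h
    have h3 : (r0 : T) < (r1 : T) := (hauto.2 _ _).mpr h2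
    exact hr1min r0 (Subtype.coe_lt_coe.mp h3)
  · have h2 : f (r1 : T) < f (r0 : T) := by
      rw [hfr r1, hfr r0]
      exact Subtype.coe_lt_coe.mpr h
    have h3 : (r1 : T) < (r0 : T) := (hauto.2 _ _).mpr h2
    exact hr0min r1 (Subtype.coe_lt_coe.mp h3)
end

section
/- If T is a tree whose height ht(T) = n is finite and every branch of T has height n, then T is reversible. -/
/- A tree is a partial order in which the set of strict predecessors of every
element is well-ordered. Basic vocabulary: condensations, automorphisms,
reversibility, heights, levels, nodes, upward closures, branches. -/

universe u v

section Aux55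
variable {T : Type u} [PartialOrder T]

lemma iio_comparable55 (hT : IsTree T) {t x y : T} (hx : x < t) (hy : y < t) :
    x ≤ y ∨ y ≤ x := by
  rcases @trichotomous_of _ (fun a b : {s : T // s < t} => (a : T) < (b : T)) (hT t).toTrichotomous ⟨x, hx⟩ ⟨y, hy⟩ with h | h | h
  · exact Or.inl (le_of_lt h)
  · exact Or.inl (le_of_eq (congrArg Subtype.val h))
  · exact Or.inr (le_of_lt h)

lemma chain_isWellOrder55 (hT : IsTree T) {b : Set T} (hb : IsChain (· ≤ ·) b) :
    IsWellOrder b (fun x y : b => (x : T) < (y : T)) := by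
  have h1 : IsTrichotomous b (fun x y : b => (x : T) < (y : T)) := by
    constructor
    intro x y hxy hyx
    refine ((?_ : _ ∨ x = y ∨ _).resolve_left hxy).resolve_right hyx
    rcases eq_or_ne x y with h | h
    · exact Or.inr (Or.inl h)
    · have hne : (x : T) ≠ y := fun hxy => h (Subtype.ext hxy)
      rcases hb x.2 y.2 hne with h1 | h1
      · exact Or.inl (lt_of_le_of_ne h1 hne)
      · exact Or.inr (Or.inr (lt_of_le_of_ne h1 hne.symm))
  have h2 : IsTrans b (fun x y : b => (x : T) < (y : T)) := ⟨fun x y z => lt_trans⟩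
  have h3 : IsWellFounded b (fun x y : b => (x : T) < (y : T)) := by
    constructor
    rw [WellFounded.wellFounded_iff_has_min]
    intro S hS
    obtain ⟨⟨x, hxb⟩, hxS⟩ := hS
    by_cases hA : ∃ y : {s : T // s < x}, ∃ h : (y : T) ∈ b, (⟨(y : T), h⟩ : b) ∈ S
    · obtain ⟨y0, hy0⟩ := hA
      obtain ⟨m, hm, hmin⟩ := (hT x).wf.has_min
        {y : {s : T // s < x} | ∃ h : (y : T) ∈ b, (⟨(y : T), h⟩ : b) ∈ S} ⟨y0, hy0⟩
      obtain ⟨hmb, hmS⟩ := hm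
      refine ⟨⟨(m : T), hmb⟩, hmS, ?_⟩
      intro z hzS hzm
      have hzx : (z : T) < x := lt_trans hzm m.2
      exact hmin ⟨(z : T), hzx⟩ ⟨z.2, hzS⟩ hzm
    · refine ⟨⟨x, hxb⟩, hxS, ?_⟩
      intro z hzS hzx
      exact hA ⟨⟨(z : T), hzx⟩, z.2, hzS⟩
  exact @IsWellOrder.mk _ _ h3 h1

lemma exists_branch55 (t : T) : ∃ b : Set T, IsBranch b ∧ t ∈ b := by
  obtain ⟨b, hb, hsub⟩ :=
    (Set.subsingleton_singleton (a := t)).isChain (r := (· ≤ ·)) |>.exists_maxChain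
  exact ⟨b, hb, hsub rfl⟩

lemma branch_finite_card55 (hT : IsTree T) {n : ℕ}
    (hbr : ∀ b : Set T, IsBranch b → chainHt b = (n : Ordinal.{u}))
    {b : Set T} (hb : IsBranch b) : b.Finite ∧ b.ncard = n := by
  have hwo := chain_isWellOrder55 hT hb.1
  have h := hbr b hb
  rw [chainHt, dif_pos hwo] at h
  have hcard : Cardinal.mk b = n := by
    have h2 := congrArg Ordinal.card h
    rwa [Ordinal.card_type, Ordinal.card_nat] at h2
  have hfin : b.Finite := by
    rw [← Cardinal.lt_aleph0_iff_set_finite, hcard]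
    exact Cardinal.nat_lt_aleph0 n
  refine ⟨hfin, ?_⟩
  have h3 := congrArg Cardinal.toNat hcard
  rwa [Cardinal.toNat_natCast, ← Nat.card, Nat.card_coe_set_eq] at h3

lemma iio_subset_branch55 (hT : IsTree T) {b : Set T} (hb : IsBranch b) {t : T}
    (ht : t ∈ b) : Set.Iio t ⊆ b := by
  have hchain : IsChain (· ≤ ·) (b ∪ Set.Iio t) := by
    intro x hx y hy hxy
    have key : ∀ p q : T, p ∈ b → q < t → p ≤ q ∨ q ≤ p := by
      intro p q hp hq
      rcases eq_or_ne p t with rfl | hpt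
      · exact Or.inr (le_of_lt hq)
      rcases hb.1 hp ht hpt with h | h
      · exact iio_comparable55 hT (lt_of_le_of_ne h hpt) hq
      · exact Or.inr (le_trans (le_of_lt hq) h)
    rcases hx with hx | hx <;> rcases hy with hy | hy
    · exact hb.1 hx hy hxy
    · exact key x y hx hy
    · exact (key y x hy hx).symm
    · exact iio_comparable55 hT hx hy
  have heq := hb.2 hchain Set.subset_union_left
  intro x hx
  rw [heq]
  exact Or.inr hx
end Aux55


/-- If `T` is a tree whose height `ht(T) = n` is finite and every
branch of `T` has height `n`, then `T` is reversible. -/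
theorem stmt5 {T : Type u} [PartialOrder T] (hT : IsTree T) (n : ℕ)
    (hht : treeHeight T = (n : Ordinal.{u}))
    (hbr : ∀ b : Set T, IsBranch b → chainHt b = (n : Ordinal.{u})) :
    Reversible T := by
  intro f hf
  obtain ⟨hbij, hmono⟩ := hf
  have hIio_fin : ∀ t : T, (Set.Iio t).Finite := by
    intro t
    obtain ⟨b, hb, htb⟩ := exists_branch55 t
    exact ((branch_finite_card55 hT hbr hb).1).subset (iio_subset_branch55 hT hb htb)
  have hA : ∀ x y : T, x < y → (Set.Iio x).ncard < (Set.Iio y).ncard := by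
    intro x y hxy
    refine Set.ncard_lt_ncard ⟨fun z hz => lt_trans hz hxy, ?_⟩ (hIio_fin y)
    intro hsub
    exact lt_irrefl x (hsub hxy)
  have hd_le : ∀ t : T, (Set.Iio t).ncard + 1 ≤ n := by
    intro t
    obtain ⟨b, hb, htb⟩ := exists_branch55 t
    obtain ⟨hbf, hbc⟩ := branch_finite_card55 hT hbr hb
    have hsub : insert t (Set.Iio t) ⊆ b :=
      Set.insert_subset htb (iio_subset_branch55 hT hb htb)
    calc (Set.Iio t).ncard + 1 = (insert t (Set.Iio t)).ncard :=
          (Set.ncard_insert_of_notMem (by simp) (hIio_fin t)).symm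
      _ ≤ b.ncard := Set.ncard_le_ncard hsub hbf
      _ = n := hbc
  have hge : ∀ t : T, (Set.Iio t).ncard ≤ (Set.Iio (f t)).ncard := by
    intro t
    have himg : f '' Set.Iio t ⊆ Set.Iio (f t) := by
      rintro _ ⟨x, hx, rfl⟩; exact hmono x t hx
    calc (Set.Iio t).ncard = (f '' Set.Iio t).ncard :=
          (Set.ncard_image_of_injective _ hbij.1).symm
      _ ≤ _ := Set.ncard_le_ncard himg (hIio_fin (f t))
  have hkey : ∀ t : T, (Set.Iio (f t)).ncard = (Set.Iio t).ncard := by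
    intro t
    refine le_antisymm ?_ (hge t)
    obtain ⟨b, hb, htb⟩ := exists_branch55 t
    obtain ⟨hbf, hbc⟩ := branch_finite_card55 hT hbr hb
    obtain ⟨u, hub, humax⟩ : ∃ u ∈ b, ∀ x ∈ b, u ≤ x → u = x := by
      obtain ⟨u, hub, hm⟩ := Set.Finite.exists_maximal hbf ⟨t, htb⟩
      exact ⟨u, hub, fun x hx h => le_antisymm h (hm hx h)⟩
    have hle_u : ∀ x ∈ b, x ≤ u := by
      intro x hxb
      rcases eq_or_ne x u with rfl | hne
      · exact le_refl x
      rcases hb.1 hxb hub hne with h | h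
      · exact h
      · exact le_of_eq (humax x hxb h).symm
    rcases eq_or_lt_of_le (hle_u t htb) with rfl | htu
    · -- t is the top of its branch: Iio t = b \ {t}
      have hIio_eq : insert t (Set.Iio t) = b := by
        apply Set.Subset.antisymm
        · exact Set.insert_subset htb (iio_subset_branch55 hT hb htb)
        · intro x hxb
          rcases eq_or_ne x t with rfl | hne
          · exact Set.mem_insert _ _
          · exact Set.mem_insert_of_mem _ (lt_of_le_of_ne (hle_u x hxb) hne)
      have hdt : (Set.Iio t).ncard + 1 = n := by
        rw [← hbc, ← hIio_eq, Set.ncard_insert_of_notMem (by simp) (hIio_fin t)]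
      have := hd_le (f t)
      omega
    · -- t < u
      set M : Set T := {x | x ∈ b ∧ t < x} with hM
      have hMfin : M.Finite := hbf.subset (fun x hx => hx.1)
      have huM : u ∈ M := ⟨hub, htu⟩
      have htM : t ∉ M := fun h => lt_irrefl t h.2
      have hpart : b = Set.Iio t ∪ insert t M := by
        apply Set.Subset.antisymm
        · intro x hxb
          rcases eq_or_ne x t with rfl | hne
          · exact Or.inr (Set.mem_insert _ _)
          rcases hb.1 hxb htb hne with h | h
          · exact Or.inl (lt_of_le_of_ne h hne)
          · exact Or.inr (Set.mem_insert_of_mem _ ⟨hxb, lt_of_le_of_ne h hne.symm⟩)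
        · rintro x (hx | hx)
          · exact iio_subset_branch55 hT hb htb hx
          · rcases hx with rfl | hx
            · exact htb
            · exact hx.1
      have hdisj : Disjoint (Set.Iio t) (insert t M) := by
        rw [Set.disjoint_left]
        rintro x hx (rfl | hxM)
        · exact lt_irrefl x hx
        · exact lt_asymm hx hxM.2
      have hcount : (Set.Iio t).ncard + (M.ncard + 1) = n := by
        rw [← hbc, hpart, Set.ncard_union_eq hdisj (hIio_fin t) (hMfin.insert t),
          Set.ncard_insert_of_notMem htM hMfin]
      set S : Set T := M \ {u} with hS
      have hScard : S.ncard + 1 = M.ncard := Set.ncard_diff_singleton_add_one huM hMfin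
      -- image side
      have hsub2 : Set.Iio (f t) ∪ insert (f t) (f '' S) ⊆ Set.Iio (f u) := by
        rintro x (hx | hx)
        · exact lt_trans hx (hmono t u htu)
        rcases hx with rfl | ⟨y, hyS, rfl⟩
        · exact hmono t u htu
        · have hyu : y < u := lt_of_le_of_ne (hle_u y hyS.1.1) hyS.2
          exact hmono y u hyu
      have hdisj2 : Disjoint (Set.Iio (f t)) (insert (f t) (f '' S)) := by
        rw [Set.disjoint_left]
        rintro x hx (rfl | ⟨y, hyS, rfl⟩)
        · exact lt_irrefl _ hx
        · exact lt_asymm hx (hmono t y hyS.1.2)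
      have hft_img : f t ∉ f '' S := by
        rintro ⟨y, hyS, hy⟩
        exact lt_irrefl t (by rw [hbij.1 hy] at hyS; exact hyS.1.2)
      have hSfin : (f '' S).Finite := (hMfin.subset Set.diff_subset).image f
      have hcount2 : (Set.Iio (f t)).ncard + (S.ncard + 1) ≤ (Set.Iio (f u)).ncard := by
        have := Set.ncard_le_ncard hsub2 (hIio_fin (f u))
        rw [Set.ncard_union_eq hdisj2 (hIio_fin (f t)) (hSfin.insert (f t)),
          Set.ncard_insert_of_notMem hft_img hSfin,
          Set.ncard_image_of_injective _ hbij.1] at this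
        exact this
      have := hd_le (f u)
      omega
  refine ⟨hbij, fun s t => ⟨hmono s t, ?_⟩⟩
  intro hst
  have hdlt : (Set.Iio s).ncard < (Set.Iio t).ncard := by
    have h := hA (f s) (f t) hst
    rwa [hkey s, hkey t] at h
  -- find s' < t with the same number of predecessors as s
  have hexists : ∃ s' , s' < t ∧ (Set.Iio s').ncard = (Set.Iio s).ncard := by
    classical
    set F := (hIio_fin t).toFinset with hF
    have hFmem : ∀ x, x ∈ F ↔ x < t := fun x => (hIio_fin t).mem_toFinset
    have hFcard : F.card = (Set.Iio t).ncard := (Set.ncard_eq_toFinset_card _ _).symm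
    have himg : F.image (fun x => (Set.Iio x).ncard) ⊆ Finset.range ((Set.Iio t).ncard) := by
      intro m hm
      simp only [Finset.mem_image] at hm
      obtain ⟨x, hxF, rfl⟩ := hm
      exact Finset.mem_range.mpr (hA x t ((hFmem x).1 hxF))
    have hinj : Set.InjOn (fun x => (Set.Iio x).ncard) (F : Set T) := by
      intro x hx y hy hxy
      by_contra hne
      have hxt := (hFmem x).1 (by simpa using hx)
      have hyt := (hFmem y).1 (by simpa using hy)
      rcases iio_comparable55 hT hxt hyt with h | h
      · exact absurd hxy (Nat.ne_of_lt (hA x y (lt_of_le_of_ne h hne)))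
      · exact absurd hxy.symm (Nat.ne_of_lt (hA y x (lt_of_le_of_ne h (Ne.symm hne))))
    have heq := Finset.eq_of_subset_of_card_le himg
      (by rw [Finset.card_range, Finset.card_image_of_injOn hinj, hFcard])
    have hk_mem : (Set.Iio s).ncard ∈ Finset.range ((Set.Iio t).ncard) :=
      Finset.mem_range.mpr hdlt
    rw [← heq] at hk_mem
    simp only [Finset.mem_image] at hk_mem
    obtain ⟨x, hxF, hxk⟩ := hk_mem
    exact ⟨x, (hFmem x).1 hxF, hxk⟩
  obtain ⟨s', hs't, hd⟩ := hexists
  have h1 : f s' < f t := hmono _ _ hs't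
  have heqf : f s = f s' := by
    rcases iio_comparable55 hT hst h1 with h | h
    · rcases eq_or_lt_of_le h with h' | h'
      · exact h'
      · have h2 := hA _ _ h'
        rw [hkey s, hkey s', hd] at h2
        omega
    · rcases eq_or_lt_of_le h with h' | h'
      · exact h'.symm
      · have h2 := hA _ _ h'
        rw [hkey s, hkey s', hd] at h2
        omega
  rw [hbij.1 heqf]
  exact hs't
end

section
/- Let T be a tree with ht(T) = ω, with T countably infinite, and in which every branch has height ω. Then T is reversible if and only if every node of T is finite. -/
/- A tree is a partial order in which the set of strict predecessors of every
element is well-ordered. Basic vocabulary: condensations, automorphisms,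
reversibility, heights, levels, nodes, upward closures, branches. -/

universe u v

namespace Stmt6Aux

open Set

variable {T : Type u} [PartialOrder T]

/-- comparability of strict predecessors -/
lemma iio_cmp (hT : IsTree T) {a b t : T} (ha : a < t) (hb : b < t) : a ≤ b ∨ b ≤ a := by
  rcases @trichotomous _ _ (hT t).toTrichotomous ⟨a, ha⟩ ⟨b, hb⟩ with h | h | h
  · exact Or.inl h.le
  · exact Or.inl (le_of_eq (congrArg Subtype.val h))
  · exact Or.inr h.le

lemma branch_mem_of_lt (hT : IsTree T) {b : Set T} (hb : IsBranch b) {x y : T}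
    (hx : x ∈ b) (hxy : y < x) : y ∈ b := by
  by_contra hy
  have hch : IsChain (· ≤ ·) (insert y b) := by
    apply hb.1.insert
    intro z hz hzy
    rcases hb.1.total hz hx with h | h
    · rcases h.lt_or_eq with h' | h'
      · exact (iio_cmp hT h' hxy).symm
      · subst h'; exact Or.inl hxy.le
    · exact Or.inl (hxy.le.trans h)
  have := hb.2 hch (subset_insert _ _)
  exact hy (this ▸ mem_insert y b)

lemma branch_wo (hT : IsTree T) {b : Set T} (hb : IsBranch b) :
    IsWellOrder b (fun x y : b => (x : T) < (y : T)) := by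
  haveI h1 : IsTrichotomous b (fun x y : b => (x : T) < (y : T)) := by
    constructor
    intro x y hn1 hn2
    suffices H : (x : T) < (y : T) ∨ x = y ∨ (y : T) < (x : T) by
      rcases H with h | h | h
      exacts [absurd h hn1, h, absurd h hn2]
    by_cases hxy : x = y
    · exact Or.inr (Or.inl hxy)
    · have : (x : T) ≠ (y : T) := fun h => hxy (Subtype.ext h)
      rcases hb.1.total x.2 y.2 with h | h
      · exact Or.inl (h.lt_of_ne this)
      · exact Or.inr (Or.inr (h.lt_of_ne this.symm))
  haveI h2 : IsTrans b (fun x y : b => (x : T) < (y : T)) := ⟨fun _ _ _ h h' => h.trans h'⟩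
  haveI h3 : IsWellFounded b (fun x y : b => (x : T) < (y : T)) := by
    constructor
    rw [WellFounded.wellFounded_iff_has_min]
    intro S hS
    obtain ⟨x, hx⟩ := hS
    by_cases hempty : ∀ z ∈ S, ¬ (z : T) < (x : T)
    · exact ⟨x, hx, hempty⟩
    · push_neg at hempty
      obtain ⟨z, hzS, hzx⟩ := hempty
      -- use well-foundedness of Iio x.val
      have wf := (hT (x : T)).wf
      rw [WellFounded.wellFounded_iff_has_min] at wf
      set S' : Set {s : T // s < (x : T)} := {p | ∃ h : (p : T) ∈ b, (⟨(p : T), h⟩ : b) ∈ S}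
      have hS' : S'.Nonempty := ⟨⟨(z : T), hzx⟩, z.2, by simpa using hzS⟩
      obtain ⟨m, hmS', hmin⟩ := wf S' hS'
      obtain ⟨hmb, hmS⟩ := hmS'
      refine ⟨⟨(m : T), hmb⟩, hmS, ?_⟩
      intro w hwS hwm
      have hwx : (w : T) < (x : T) := hwm.trans m.2
      exact hmin ⟨(w : T), hwx⟩ ⟨w.2, by simpa using hwS⟩ hwm
  exact { }

lemma chainHt_eq (hT : IsTree T) {b : Set T} (hb : IsBranch b) :
    chainHt b = @Ordinal.type b (fun x y : b => (x : T) < (y : T)) (branch_wo hT hb) := by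
  rw [chainHt, dif_pos (branch_wo hT hb)]

/-- every chain extends to a branch -/
lemma exists_branch {s : Set T} (hs : IsChain (· ≤ ·) s) : ∃ b, IsBranch b ∧ s ⊆ b :=
  hs.exists_maxChain

section WithBr

variable (hT : IsTree T) (hbr : ∀ b : Set T, IsBranch b → chainHt b = Ordinal.omega0)

include hT hbr
set_option linter.unusedSectionVars false

lemma exists_branch_through (x : T) : ∃ b, IsBranch b ∧ insert x (Iio x) ⊆ b := by
  apply exists_branch
  intro y hy z hz hne
  rcases hy with rfl | hy
  · rcases hz with rfl | hz
    · exact absurd rfl hne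
    · exact Or.inr hz.le
  · rcases hz with rfl | hz
    · exact Or.inl hy.le
    · exact iio_cmp hT hy hz

lemma iio_finite (x : T) : (Iio x).Finite := by
  obtain ⟨b, hb, hsub⟩ := exists_branch_through hT hbr x
  haveI hwo := branch_wo hT hb
  have hω : @Ordinal.type b (fun x y : b => (x : T) < (y : T)) hwo = Ordinal.omega0 := by
    rw [← chainHt_eq hT hb]; exact hbr b hb
  set r := fun x y : b => (x : T) < (y : T)
  set xx : b := ⟨x, hsub (mem_insert _ _)⟩
  have hlt : Ordinal.typein r xx < Ordinal.omega0 := hω ▸ Ordinal.typein_lt_type r xx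
  obtain ⟨n, hn⟩ := Ordinal.lt_omega0.mp hlt
  have h1 : Cardinal.mk {y : b // r y xx}
      = ((Ordinal.typein r).toRelEmbedding xx : Ordinal).card :=
    (Ordinal.card_typein (r := r) xx).symm
  rw [hn] at h1
  have hfin : Finite {y : b // r y xx} := by
    rw [← Cardinal.mk_lt_aleph0_iff, h1, Ordinal.card_nat]
    exact Cardinal.nat_lt_aleph0 n
  have : Finite (Iio x) := by
    apply Finite.of_injective (fun y : Iio x =>
      (⟨⟨(y : T), hsub (mem_insert_of_mem _ y.2)⟩, y.2⟩ : {y : b // r y xx}))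
    intro y z h
    apply Subtype.ext
    have := congrArg (fun w : {p : b // r p xx} => ((w : b) : T)) h
    simpa using this
  exact finite_coe_iff.mp this

lemma upset_infinite (x : T) : {y : T | x < y}.Infinite := by
  obtain ⟨b, hb, hsub⟩ := exists_branch_through hT hbr x
  haveI hwo := branch_wo hT hb
  have hω : @Ordinal.type b (fun x y : b => (x : T) < (y : T)) hwo = Ordinal.omega0 := by
    rw [← chainHt_eq hT hb]; exact hbr b hb
  have hbinf : b.Infinite := by
    rw [← Set.infinite_coe_iff, Cardinal.infinite_iff]
    have : Cardinal.mk b = (Ordinal.type (fun x y : b => (x : T) < (y : T))).card :=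
      (Ordinal.card_type _).symm
    rw [this, hω]
    simp [Ordinal.card_omega0]
  have hsplit : b ⊆ (insert x (Iio x)) ∪ {y | x < y} := by
    intro z hz
    rcases hb.1.total hz (hsub (mem_insert _ _)) with h | h
    · rcases h.lt_or_eq with h' | h'
      · exact Or.inl (mem_insert_of_mem _ h')
      · exact Or.inl (h' ▸ mem_insert _ _)
    · rcases h.lt_or_eq with h' | h'
      · exact Or.inr h'
      · exact Or.inl (h'.symm ▸ mem_insert _ _)
  by_contra hfin
  rw [Set.not_infinite] at hfin
  exact hbinf (Set.Finite.subset (((iio_finite hT hbr x).insert x).union hfin) hsplit)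

end WithBr

section Easy

variable (hT : IsTree T)

include hT in
/-- all "levels" are finite when all nodes are finite -/
lemma lvl_finite (hfin : ∀ t : T, (Iio t).Finite)
    (hnode : ∀ N : Set T, IsNode N → N.Finite) :
    ∀ n : ℕ, {t : T | (Iio t).ncard = n}.Finite := by
  intro n
  induction n with
  | zero =>
    rcases Set.eq_empty_or_nonempty {t : T | (Iio t).ncard = 0} with h | ⟨r, hr⟩
    · rw [h]; exact finite_empty
    · have hr0 : Iio r = ∅ := by
        have := hr
        simp only [mem_setOf_eq] at this
        exact (Set.ncard_eq_zero (hfin r)).mp this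
      have : {t : T | (Iio t).ncard = 0} = {s : T | Iio s = Iio r} := by
        ext t
        simp only [mem_setOf_eq, hr0]
        constructor
        · intro h; exact (Set.ncard_eq_zero (hfin t)).mp h
        · intro h; rw [h]; simp
      rw [this]
      exact hnode _ ⟨r, rfl⟩
  | succ n ih =>
    have hsub : {t : T | (Iio t).ncard = n + 1} ⊆
        ⋃ m ∈ {t : T | (Iio t).ncard = n}, {s : T | Iio s = insert m (Iio m)} := by
      intro s hs
      simp only [mem_setOf_eq] at hs
      have hne : (Iio s).Nonempty := by
        rw [← Set.ncard_pos (hfin s), hs]; omega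
      obtain ⟨m, hm, hmax⟩ := Set.Finite.exists_maximalFor id _ (hfin s) hne
      have hgreat : ∀ b ∈ Iio s, b ≤ m := by
        intro b hb
        rcases iio_cmp hT hm hb with h | h
        · exact hmax hb h
        · exact h
      have heq : Iio s = insert m (Iio m) := by
        ext u
        constructor
        · intro hu
          rcases (hgreat u hu).lt_or_eq with h | h
          · exact mem_insert_of_mem _ h
          · exact h ▸ mem_insert _ _
        · intro hu
          rcases hu with rfl | hu
          · exact hm
          · exact hu.trans hm
      have hmn : (Iio m).ncard = n := by
        have : (Iio s).ncard = (Iio m).ncard + 1 := by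
          rw [heq, Set.ncard_insert_of_notMem (by simp) (hfin m)]
        omega
      exact mem_biUnion hmn heq
    apply Set.Finite.subset _ hsub
    apply Set.Finite.biUnion' (ih)
    intro m _
    rcases Set.eq_empty_or_nonempty {s : T | Iio s = insert m (Iio m)} with h | ⟨s₀, hs₀⟩
    · rw [h]; exact finite_empty
    · have : {s : T | Iio s = insert m (Iio m)} = {s : T | Iio s = Iio s₀} := by
        ext u; simp only [mem_setOf_eq]
        rw [hs₀]
      rw [this]
      exact hnode _ ⟨s₀, rfl⟩

include hT in
lemma rev_of_nodes_finite (hfin : ∀ t : T, (Iio t).Finite)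
    (hnode : ∀ N : Set T, IsNode N → N.Finite) : Reversible T := by
  intro F hF
  obtain ⟨hbij, hmono⟩ := hF
  have himg : ∀ t : T, F '' (Iio t) ⊆ Iio (F t) := by
    rintro t _ ⟨u, hu, rfl⟩
    exact hmono u t hu
  have hge : ∀ t : T, (Iio t).ncard ≤ (Iio (F t)).ncard := by
    intro t
    calc (Iio t).ncard = (F '' Iio t).ncard := (Set.ncard_image_of_injective _ hbij.1).symm
    _ ≤ (Iio (F t)).ncard := Set.ncard_le_ncard (himg t) (hfin (F t))
  have hDfin : ∀ n : ℕ, {t : T | (Iio t).ncard < n}.Finite := by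
    intro n
    have hsub : {t : T | (Iio t).ncard < n} ⊆
        ⋃ m ∈ Finset.range n, {t : T | (Iio t).ncard = m} := by
      intro t ht
      simp only [mem_setOf_eq] at ht
      exact mem_biUnion (Finset.mem_range.mpr ht) rfl
    exact Set.Finite.subset (Set.Finite.biUnion (Finset.range n).finite_toSet
      (fun m _ => lvl_finite hT hfin hnode m)) hsub
  have hD : ∀ n : ℕ, F '' {t : T | (Iio t).ncard < n} = {t : T | (Iio t).ncard < n} := by
    intro n
    have hsub : {t : T | (Iio t).ncard < n} ⊆ F '' {t : T | (Iio t).ncard < n} := by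
      intro d hd
      obtain ⟨x, rfl⟩ := hbij.2 d
      refine ⟨x, ?_, rfl⟩
      simp only [mem_setOf_eq] at hd ⊢
      exact lt_of_le_of_lt (hge x) hd
    exact (Set.eq_of_subset_of_ncard_le hsub
      (le_of_eq (Set.ncard_image_of_injective {t : T | (Iio t).ncard < n} hbij.1))
      ((hDfin n).image F)).symm
  have heq : ∀ t : T, (Iio (F t)).ncard = (Iio t).ncard := by
    intro t
    refine le_antisymm ?_ (hge t)
    have ht : t ∈ {t : T | (Iio t).ncard < (Iio t).ncard + 1} := by simp
    have : F t ∈ {s : T | (Iio s).ncard < (Iio t).ncard + 1} := by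
      rw [← hD ((Iio t).ncard + 1)]
      exact ⟨t, ht, rfl⟩
    simp only [mem_setOf_eq] at this
    omega
  have himg_eq : ∀ t : T, F '' (Iio t) = Iio (F t) := by
    intro t
    refine Set.eq_of_subset_of_ncard_le (himg t) ?_ (hfin (F t))
    rw [heq, Set.ncard_image_of_injective _ hbij.1]
  refine ⟨hbij, fun s t => ⟨hmono s t, fun h => ?_⟩⟩
  have : F s ∈ F '' (Iio t) := (himg_eq t).symm ▸ h
  obtain ⟨u, hu, he⟩ := this
  rwa [← hbij.1 he]

end Easy

section LinExt

variable (hT : IsTree T)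

include hT in
/-- linear extension of type omega of a countable subset with finite downsets -/
lemma exists_linext (hfin : ∀ t : T, (Iio t).Finite) (S : Set T)
    (hS : S.Infinite) (hScnt : S.Countable) :
    ∃ e : ℕ → T, (∀ n, e n ∈ S) ∧ (∀ x ∈ S, ∃ n, e n = x) ∧
      Function.Injective e ∧ (∀ m n : ℕ, e m < e n → m < n) := by
  classical
  haveI hcnt : Countable ↥S := hScnt.to_subtype
  haveI hinf : Infinite ↥S := hS.to_subtype
  obtain ⟨φ⟩ := (nonempty_equiv_of_countable : Nonempty (↥S ≃ ℕ))
  set g : ℕ → T := fun n => ((φ.symm n : ↥S) : T) with hg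
  have hgS : ∀ n, g n ∈ S := fun n => (φ.symm n).2
  have hgsurj : ∀ x ∈ S, ∃ i, g i = x := by
    intro x hx
    exact ⟨φ ⟨x, hx⟩, by simp [hg]⟩
  have cand_ne : ∀ l : List T, ∃ i, g i ∉ l ∧ ∀ y ∈ S, y < g i → y ∈ l := by
    intro l
    have hdi : (S \ {x | x ∈ l}).Infinite := hS.diff l.finite_toSet
    obtain ⟨z, hz⟩ := hdi.nonempty
    set Z := {y ∈ S | y ≤ z ∧ y ∉ l} with hZ
    have hZne : Z.Nonempty := ⟨z, hz.1, le_refl z, hz.2⟩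
    have hZfin : Z.Finite := by
      apply ((hfin z).insert z).subset
      intro y hy
      rcases hy.2.1.lt_or_eq with h | h
      · exact mem_insert_of_mem _ h
      · exact h ▸ mem_insert _ _
    obtain ⟨m, hm, hmin⟩ := Set.Finite.exists_minimalFor id _ hZfin hZne
    obtain ⟨i, hi⟩ := hgsurj m hm.1
    refine ⟨i, ?_, ?_⟩
    · rw [hi]; exact hm.2.2
    · intro y hyS hylt
      rw [hi] at hylt
      by_contra hyl
      have hyZ : y ∈ Z := ⟨hyS, (hylt.le.trans hm.2.1), hyl⟩
      have hym := hmin hyZ hylt.le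
      simp only [id] at hym
      exact lt_irrefl y (hylt.trans_le hym)
  let pickI : List T → ℕ := fun l => Nat.find (cand_ne l)
  let pk : List T → T := fun l => g (pickI l)
  let L : ℕ → List T := fun n => Nat.rec (motive := fun _ => List T) [] (fun _ l => l ++ [pk l]) n
  let e : ℕ → T := fun n => pk (L n)
  have hLsucc : ∀ n, L (n + 1) = L n ++ [e n] := fun n => rfl
  have espec : ∀ n, g (pickI (L n)) ∉ L n ∧ ∀ y ∈ S, y < g (pickI (L n)) → y ∈ L n :=
    fun n => Nat.find_spec (cand_ne (L n))
  have heS : ∀ n, e n ∈ S := fun n => hgS _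
  have hmem : ∀ n x, x ∈ L n ↔ ∃ m < n, e m = x := by
    intro n
    induction n with
    | zero => intro x; simp [L]
    | succ n ih =>
      intro x
      rw [hLsucc n]
      simp only [List.mem_append, List.mem_singleton, ih x]
      constructor
      · rintro (⟨m, hm, rfl⟩ | rfl)
        · exact ⟨m, by omega, rfl⟩
        · exact ⟨n, by omega, rfl⟩
      · rintro ⟨m, hm, rfl⟩
        rcases Nat.lt_succ_iff_lt_or_eq.mp hm with h | h
        · exact Or.inl ⟨m, h, rfl⟩
        · exact Or.inr (by rw [h])
  have hinj : Function.Injective e := by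
    intro m n h
    by_contra hne
    rcases Nat.lt_or_ge m n with hlt | hge
    · have : e m ∈ L n := (hmem n (e m)).mpr ⟨m, hlt, rfl⟩
      rw [h] at this
      exact (espec n).1 this
    · have hlt : n < m := by omega
      have : e n ∈ L m := (hmem m (e n)).mpr ⟨n, hlt, rfl⟩
      rw [← h] at this
      exact (espec m).1 this
  have hmono : ∀ m n : ℕ, e m < e n → m < n := by
    intro m n h
    have : e m ∈ L n := (espec n).2 (e m) (heS m) h
    obtain ⟨j, hj, hje⟩ := (hmem n (e m)).mp this
    rwa [← hinj hje]
  have hLmono : ∀ m n : ℕ, m ≤ n → ∀ x, x ∈ L m → x ∈ L n := by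
    intro m n hmn x hx
    obtain ⟨j, hj, hje⟩ := (hmem m x).mp hx
    exact (hmem n x).mpr ⟨j, by omega, hje⟩
  refine ⟨e, heS, ?_, hinj, hmono⟩
  -- surjectivity
  suffices H : ∀ k, ∀ x ∈ S, ({y ∈ S | y < x}).ncard < k → ∃ n, e n = x by
    intro x hx
    exact H (({y ∈ S | y < x}).ncard + 1) x hx (Nat.lt_succ_self _)
  intro k
  induction k with
  | zero => intro x hx h; omega
  | succ k IH =>
    intro x hx hk
    set P := {y ∈ S | y < x} with hP
    have hPfin : P.Finite := (hfin x).subset (fun y hy => hy.2)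
    have hPr : ∀ y ∈ P, ∃ n, e n = y := by
      intro y hy
      apply IH y hy.1
      have hss : {z ∈ S | z < y} ⊂ P := by
        constructor
        · intro z hz
          exact ⟨hz.1, hz.2.trans hy.2⟩
        · intro hcon
          exact lt_irrefl y (hcon hy).2
      have := Set.ncard_lt_ncard hss hPfin
      omega
    choose idx hidx using hPr
    let FI : T → ℕ := fun y => if h : y ∈ P then idx y h else 0
    set n₀ := (hPfin.toFinset.sup FI) + 1 with hn₀
    have hPL : ∀ y ∈ P, y ∈ L n₀ := by
      intro y hy
      have h1 : e (FI y) = y := by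
        simp only [FI, dif_pos hy]
        exact hidx y hy
      have h2 : FI y < n₀ := by
        have : FI y ≤ hPfin.toFinset.sup FI :=
          Finset.le_sup (hPfin.mem_toFinset.mpr hy)
        omega
      exact (hmem n₀ y).mpr ⟨FI y, h2, h1⟩
    by_contra hnot
    push_neg at hnot
    have hxnot : ∀ n, x ∉ L n := by
      intro n h
      obtain ⟨m, _, hm⟩ := (hmem n x).mp h
      exact hnot m hm
    obtain ⟨i, hgi⟩ := hgsurj x hx
    have hple : ∀ n, n₀ ≤ n → pickI (L n) ≤ i := by
      intro n hn
      apply Nat.find_min' (cand_ne (L n))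
      refine ⟨?_, ?_⟩
      · rw [hgi]; exact hxnot n
      · intro y hyS hylt
        rw [hgi] at hylt
        exact hLmono n₀ n hn y (hPL y ⟨hyS, hylt⟩)
    have hcard : (Finset.range (i + 1)).card < (Finset.Icc n₀ (n₀ + i + 1)).card := by
      rw [Finset.card_range, Nat.card_Icc]
      omega
    obtain ⟨a, ha, b, hb, hab, heqp⟩ :=
      Finset.exists_ne_map_eq_of_card_lt_of_maps_to hcard
        (f := fun n => pickI (L n)) (by
          intro n hn
          rw [Finset.mem_coe, Finset.mem_range]
          show pickI (L n) < i + 1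
          have := hple n (Finset.mem_Icc.mp hn).1
          omega)
    have : e a = e b := by
      show g (pickI (L a)) = g (pickI (L b))
      rw [heqp]
    exact hab (hinj this)

end LinExt

section Chains

/-- partition a countable upward-closed set (with infinite upsets) into omega-chains -/
lemma exists_chains (U : Set T) (hUcnt : U.Countable) (hUinf : U.Infinite)
    (hUup : ∀ x ∈ U, ∀ y, x ≤ y → y ∈ U)
    (hups : ∀ x ∈ U, {y : T | x < y}.Infinite) :
    ∃ d : ℕ → ℕ → T, (∀ k j, d k j ∈ U) ∧ (∀ k j j', j < j' → d k j < d k j') ∧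
      Function.Injective (fun p : ℕ × ℕ => d p.1 p.2) ∧
      (∀ x ∈ U, ∃ k j, d k j = x) ∧ d 0 0 < d 1 0 := by
  classical
  haveI hcnt : Countable ↥U := hUcnt.to_subtype
  haveI hinf : Infinite ↥U := hUinf.to_subtype
  obtain ⟨φ⟩ := (nonempty_equiv_of_countable : Nonempty (↥U ≃ ℕ))
  set g : ℕ → T := fun n => ((φ.symm n : ↥U) : T) with hg
  have hgU : ∀ n, g n ∈ U := fun n => (φ.symm n).2
  have hgsurj : ∀ x ∈ U, ∃ i, g i = x := by
    intro x hx
    exact ⟨φ ⟨x, hx⟩, by simp [hg]⟩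
  -- candidate existence
  have cand_ne : ∀ (l : List T) (o : Option T), (∀ w ∈ o, w ∈ U) →
      ∃ i, g i ∉ l ∧ ∀ w ∈ o, w < g i := by
    intro l o ho
    match o with
    | none =>
      obtain ⟨z, hz⟩ := (hUinf.diff l.finite_toSet).nonempty
      obtain ⟨i, hi⟩ := hgsurj z hz.1
      exact ⟨i, by rw [hi]; exact hz.2, by simp⟩
    | some w =>
      have hw : w ∈ U := ho w rfl
      obtain ⟨z, hz⟩ := ((hups w hw).diff l.finite_toSet).nonempty
      have hzU : z ∈ U := hUup w hw z (le_of_lt hz.1)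
      obtain ⟨i, hi⟩ := hgsurj z hzU
      refine ⟨i, by rw [hi]; exact hz.2, ?_⟩
      intro w' hw'
      simp only [Option.mem_def, Option.some.injEq] at hw'
      rw [hi, ← hw']
      exact hz.1
  let pick' : List T → Option T → ℕ := fun l o =>
    if h : ∃ i, g i ∉ l ∧ ∀ w ∈ o, w < g i then Nat.find h else 0
  let O' : ℕ → List T → Option T := fun n l =>
    if (Nat.unpair n).2 = 0 then
      (if (Nat.unpair n).1 = 1 then some (l.getD 0 (g 0)) else none)
    else some (l.getD (Nat.pair (Nat.unpair n).1 ((Nat.unpair n).2 - 1)) (g 0))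
  let step : ℕ → List T → T := fun n l => g (pick' l (O' n l))
  let L : ℕ → List T := fun n =>
    Nat.rec (motive := fun _ => List T) [] (fun m l => l ++ [step m l]) n
  let D : ℕ → T := fun n => step n (L n)
  have hLsucc : ∀ n, L (n + 1) = L n ++ [D n] := fun n => rfl
  have hlen : ∀ n, (L n).length = n := by
    intro n
    induction n with
    | zero => rfl
    | succ n ih => rw [hLsucc n, List.length_append, ih]; rfl
  have hmem : ∀ n x, x ∈ L n ↔ ∃ m < n, D m = x := by
    intro n
    induction n with
    | zero => intro x; simp [L]
    | succ n ih =>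
      intro x
      rw [hLsucc n]
      simp only [List.mem_append, List.mem_singleton, ih x]
      constructor
      · rintro (⟨m, hm, rfl⟩ | rfl)
        · exact ⟨m, by omega, rfl⟩
        · exact ⟨n, by omega, rfl⟩
      · rintro ⟨m, hm, rfl⟩
        rcases Nat.lt_succ_iff_lt_or_eq.mp hm with h | h
        · exact Or.inl ⟨m, h, rfl⟩
        · exact Or.inr (by rw [h])
  have hgetD : ∀ n m, m < n → (L n).getD m (g 0) = D m := by
    intro n
    induction n with
    | zero => intro m hm; omega
    | succ n ih =>
      intro m hm
      rw [hLsucc n]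
      rcases Nat.lt_or_ge m n with h | h
      · rw [List.getD_append _ _ _ _ (by rw [hlen n]; exact h)]
        exact ih m h
      · have hmn : m = n := by omega
        subst hmn
        have key : ∀ (l : List T) (y : T), l.length = m → (l ++ [y]).getD m (g 0) = y := by
          intro l y hl
          subst hl
          simp [List.getD_append_right]
        exact key (L m) (D m) (hlen m)
  have hgetDU : ∀ n m, (L n).getD m (g 0) ∈ U := by
    intro n m
    rcases Nat.lt_or_ge m n with h | h
    · rw [hgetD n m h]; exact hgU _
    · rw [List.getD_eq_default _ _ (by rw [hlen n]; exact h)]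
      exact hgU 0
  have hOU : ∀ n, ∀ w ∈ O' n (L n), w ∈ U := by
    intro n w hw
    simp only [O'] at hw
    split at hw
    · split at hw
      · simp only [Option.mem_def, Option.some.injEq] at hw
        rw [← hw]; exact hgetDU n 0
      · simp at hw
    · simp only [Option.mem_def, Option.some.injEq] at hw
      rw [← hw]; exact hgetDU n _
  have hspec : ∀ n, D n ∉ L n ∧ ∀ w ∈ O' n (L n), w < D n := by
    intro n
    have hex := cand_ne (L n) (O' n (L n)) (hOU n)
    have : D n = g (Nat.find hex) := by
      show g (pick' (L n) (O' n (L n))) = g (Nat.find hex)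
      simp only [pick', dif_pos hex]
    rw [this]
    exact Nat.find_spec hex
  have hDU : ∀ n, D n ∈ U := fun n => hgU _
  have hDinj : Function.Injective D := by
    intro m n h
    by_contra hne
    rcases Nat.lt_or_ge m n with hlt | hge
    · exact (hspec n).1 ((hmem n (D n)).mpr ⟨m, hlt, h⟩)
    · have hlt : n < m := by omega
      exact (hspec m).1 ((hmem m (D m)).mpr ⟨n, hlt, h.symm⟩)
  have hstep : ∀ k j, D (Nat.pair k j) < D (Nat.pair k (j + 1)) := by
    intro k j
    set n := Nat.pair k (j + 1) with hn
    have hun : Nat.unpair n = (k, j + 1) := Nat.unpair_pair k (j + 1)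
    have hO : O' n (L n) = some ((L n).getD (Nat.pair k j) (g 0)) := by
      simp only [O', hun]
      norm_num
    have hidx : Nat.pair k j < n := Nat.pair_lt_pair_right k (by omega)
    have := (hspec n).2 ((L n).getD (Nat.pair k j) (g 0)) (by rw [hO]; rfl)
    rwa [hgetD n _ hidx] at this
  have hviol : D 0 < D 2 := by
    have h20 : Nat.unpair 2 = (1, 0) := by
      rw [show (2 : ℕ) = Nat.pair 1 0 from by decide]
      exact Nat.unpair_pair 1 0
    have hO : O' 2 (L 2) = some ((L 2).getD 0 (g 0)) := by
      simp [O', h20]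
    have := (hspec 2).2 ((L 2).getD 0 (g 0)) (by rw [hO]; rfl)
    rwa [hgetD 2 0 (by omega)] at this
  -- surjectivity
  have hDsurj : ∀ x ∈ U, ∃ n, D n = x := by
    intro x hx
    by_contra hnot
    push_neg at hnot
    have hxnot : ∀ n, x ∉ L n := by
      intro n h
      obtain ⟨m, _, hm⟩ := (hmem n x).mp h
      exact hnot m hm
    obtain ⟨i, hgi⟩ := hgsurj x hx
    -- seed steps pick minimal unused indices
    set pidx : ℕ → ℕ := fun k =>
      pick' (L (Nat.pair (2 * k + 2) 0)) (O' (Nat.pair (2 * k + 2) 0) (L (Nat.pair (2 * k + 2) 0)))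
      with hpidx
    have hDpidx : ∀ k, D (Nat.pair (2 * k + 2) 0) = g (pidx k) := fun k => rfl
    have hseed : ∀ k : ℕ, pidx k ≤ i := by
      intro k
      set n := Nat.pair (2 * k + 2) 0 with hn
      have hun : Nat.unpair n = (2 * k + 2, 0) := Nat.unpair_pair _ _
      have hO : O' n (L n) = none := by
        simp only [O', hun]
        norm_num
        exact fun h => absurd h (by omega)
      have hex : ∃ i', g i' ∉ L n ∧ ∀ w ∈ (O' n (L n)), w < g i' :=
        cand_ne (L n) _ (hOU n)
      show pick' (L n) (O' n (L n)) ≤ i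
      simp only [pick', dif_pos hex]
      apply Nat.find_min' hex
      refine ⟨by rw [hgi]; exact hxnot n, ?_⟩
      rw [hO]
      simp
    have hcard : (Finset.range (i + 1)).card < (Finset.range (i + 2)).card := by simp
    obtain ⟨a, _, b, _, hab, heqp⟩ :=
      Finset.exists_ne_map_eq_of_card_lt_of_maps_to hcard (f := pidx) (by
        intro k _
        rw [Finset.mem_coe, Finset.mem_range]
        have := hseed k
        omega)
    have hDD : D (Nat.pair (2 * a + 2) 0) = D (Nat.pair (2 * b + 2) 0) := by
      rw [hDpidx a, hDpidx b, heqp]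
    rw [hDinj.eq_iff, Nat.pair_eq_pair] at hDD
    obtain ⟨h2, -⟩ := hDD
    exact hab (by omega)
  -- assemble
  refine ⟨fun k j => D (Nat.pair k j), fun k j => hDU _, ?_, ?_, ?_, ?_⟩
  · intro k j j' h
    induction j', h using Nat.le_induction with
    | base => exact hstep k j
    | succ j' hj ih => exact ih.trans (hstep k j')
  · intro p q h
    simp only at h
    have h2 := hDinj h
    rw [Nat.pair_eq_pair] at h2
    exact Prod.ext h2.1 h2.2
  · intro x hx
    obtain ⟨n, hn⟩ := hDsurj x hx
    refine ⟨(Nat.unpair n).1, (Nat.unpair n).2, ?_⟩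
    show D (Nat.pair (Nat.unpair n).1 (Nat.unpair n).2) = x
    rw [Nat.pair_unpair]
    exact hn
  · show D (Nat.pair 0 0) < D (Nat.pair 1 0)
    rw [show Nat.pair 0 0 = 0 by decide, show Nat.pair 1 0 = 2 by decide]
    exact hviol

end Chains

section Hard

lemma not_rev_of_infinite_node (hT : IsTree T) [Countable T]
    (hfin : ∀ t : T, (Iio t).Finite) (hups : ∀ t : T, {y : T | t < y}.Infinite)
    (t₀ : T) (hN : {s : T | Iio s = Iio t₀}.Infinite) : ¬ Reversible T := by
  classical
  set N := {s : T | Iio s = Iio t₀} with hNdef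
  haveI := hN.to_subtype
  obtain ⟨ψ⟩ := (nonempty_equiv_of_countable : Nonempty (↥N ≃ ℕ))
  set ts : ℕ → T := fun k => ((ψ.symm k : ↥N) : T) with hts
  have htsN : ∀ k, Iio (ts k) = Iio t₀ := fun k => (ψ.symm k).2
  have htsinj : Function.Injective ts := by
    intro k k' h
    have : ψ.symm k = ψ.symm k' := Subtype.ext h
    simpa using congrArg ψ this
  have hNincomp : ∀ {s t : T}, Iio s = Iio t₀ → Iio t = Iio t₀ → s < t → False := by
    intro s t hs ht hlt
    have h1 : s ∈ Iio t := hlt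
    rw [ht, ← hs] at h1
    exact lt_irrefl s h1
  set U := {x : T | ∃ k, ts k ≤ x} with hU
  have hUup : ∀ x ∈ U, ∀ y, x ≤ y → y ∈ U := by
    rintro x ⟨k, hk⟩ y hxy
    exact ⟨k, hk.trans hxy⟩
  have hUkinf : ∀ k, {x : T | ts k ≤ x}.Infinite := by
    intro k
    apply (hups (ts k)).mono
    intro y hy
    exact le_of_lt hy
  have hUinf : U.Infinite := (hUkinf 0).mono (fun x hx => ⟨0, hx⟩)
  have hUcnt : U.Countable := Set.to_countable U
  have hupsU : ∀ x ∈ U, {y : T | x < y}.Infinite := fun x _ => hups x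
  have huniq : ∀ (x : T) (k k' : ℕ), ts k ≤ x → ts k' ≤ x → k = k' := by
    intro x k k' h h'
    by_contra hne
    have htsne : ts k ≠ ts k' := fun he => hne (htsinj he)
    rcases h.lt_or_eq with h1 | h1
    · rcases h'.lt_or_eq with h2 | h2
      · rcases iio_cmp hT h1 h2 with hc | hc
        · exact hNincomp (htsN k) (htsN k') (hc.lt_of_ne htsne)
        · exact hNincomp (htsN k') (htsN k) (hc.lt_of_ne htsne.symm)
      · exact hNincomp (htsN k) (htsN k') (h2 ▸ h1)
    · rcases h'.lt_or_eq with h2 | h2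
      · exact hNincomp (htsN k') (htsN k) (h1 ▸ h2)
      · exact htsne (h1.trans h2.symm)
  have hcross : ∀ x, x ∉ U → ∀ u ∈ U, x < u → ∀ v ∈ U, x < v := by
    intro x hxU u hu hxu v hv
    obtain ⟨k, hk⟩ := hu
    have hxk : x < ts k := by
      rcases hk.lt_or_eq with h1 | h1
      · rcases iio_cmp hT hxu h1 with hc | hc
        · refine hc.lt_of_ne (fun he => hxU ?_)
          exact ⟨k, le_of_eq he.symm⟩
        · exact absurd ⟨k, hc⟩ hxU
      · exact h1 ▸ hxu
    obtain ⟨k', hk'⟩ := hv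
    have hxk' : x ∈ Iio (ts k') := by
      rw [htsN k']
      rw [← htsN k]
      exact hxk
    exact lt_of_lt_of_le hxk' hk'
  -- linear extensions of each subtree
  have hUk : ∀ k : ℕ, ∃ e : ℕ → T, (∀ n, e n ∈ {x : T | ts k ≤ x}) ∧
      (∀ x ∈ {x : T | ts k ≤ x}, ∃ n, e n = x) ∧ Function.Injective e ∧
      (∀ m n : ℕ, e m < e n → m < n) :=
    fun k => exists_linext hT hfin _ (hUkinf k) (Set.to_countable _)
  choose es hes1 hes2 hes3 hes4 using hUk
  obtain ⟨d, hdU, hdmono, hdinj, hdsurj, hdviol⟩ := exists_chains U hUcnt hUinf hUup hupsU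
  set K : T → ℕ := fun x => if h : ∃ k, ts k ≤ x then h.choose else 0 with hKdef
  set J : T → ℕ := fun x => if h : ∃ j, es (K x) j = x then h.choose else 0 with hJdef
  set F : T → T := fun x => if x ∈ U then d (K x) (J x) else x with hFdef
  have hK : ∀ x ∈ U, ts (K x) ≤ x := by
    intro x hx
    have hx' : ∃ k, ts k ≤ x := hx
    simp only [hKdef]
    rw [dif_pos hx']
    exact hx'.choose_spec
  have hKval : ∀ (x : T) (k : ℕ), ts k ≤ x → K x = k :=
    fun x k h => huniq x (K x) k (hK x ⟨k, h⟩) h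
  have hJ : ∀ x ∈ U, es (K x) (J x) = x := by
    intro x hx
    have hex : ∃ j, es (K x) j = x := hes2 (K x) x (hK x hx)
    simp only [hJdef]
    rw [dif_pos hex]
    exact hex.choose_spec
  have hFeq : ∀ x ∈ U, F x = d (K x) (J x) := by
    intro x hx
    simp only [hFdef]
    rw [if_pos hx]
  have hFid : ∀ x, x ∉ U → F x = x := by
    intro x hx
    simp only [hFdef]
    rw [if_neg hx]
  have hFval : ∀ k j, F (es k j) = d k j := by
    intro k j
    have hxU : es k j ∈ U := ⟨k, hes1 k j⟩
    have hKx : K (es k j) = k := hKval _ k (hes1 k j)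
    have hJx : J (es k j) = j := by
      have h1 : es (K (es k j)) (J (es k j)) = es k j := hJ _ hxU
      rw [hKx] at h1
      exact hes3 k h1
    rw [hFeq _ hxU, hKx, hJx]
  have hFinj : Function.Injective F := by
    intro x y h
    by_cases hx : x ∈ U <;> by_cases hy : y ∈ U
    · rw [hFeq x hx, hFeq y hy] at h
      have h2 : (fun p : ℕ × ℕ => d p.1 p.2) (K x, J x) = (fun p : ℕ × ℕ => d p.1 p.2) (K y, J y) := h
      have h3 := hdinj h2
      have hK3 : K x = K y := congrArg Prod.fst h3
      have hJ3 : J x = J y := congrArg Prod.snd h3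
      rw [← hJ x hx, ← hJ y hy, hK3, hJ3]
    · rw [hFeq x hx, hFid y hy] at h
      exact absurd (h ▸ hdU (K x) (J x)) hy
    · rw [hFid x hx, hFeq y hy] at h
      exact absurd (h ▸ hdU (K y) (J y)) hx
    · rwa [hFid x hx, hFid y hy] at h
  have hFsurj : Function.Surjective F := by
    intro y
    by_cases hy : y ∈ U
    · obtain ⟨k, j, hkj⟩ := hdsurj y hy
      exact ⟨es k j, by rw [hFval k j, hkj]⟩
    · exact ⟨y, hFid y hy⟩
  have hFmono : ∀ s t : T, s < t → F s < F t := by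
    intro s t hst
    by_cases hs : s ∈ U
    · have ht : t ∈ U := hUup s hs t hst.le
      have hKeq : K t = K s := hKval t (K s) ((hK s hs).trans hst.le)
      have hJlt : J s < J t := by
        apply hes4 (K s)
        rw [hJ s hs]
        have h1 := hJ t ht
        rw [hKeq] at h1
        rw [h1]
        exact hst
      rw [hFeq s hs, hFeq t ht, hKeq]
      exact hdmono (K s) _ _ hJlt
    · by_cases ht : t ∈ U
      · rw [hFeq t ht, hFid s hs]
        exact hcross s hs t ht hst _ (hdU (K t) (J t))
      · rw [hFid s hs, hFid t ht]
        exact hst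
  intro hrev
  have hauto := hrev F ⟨⟨hFinj, hFsurj⟩, hFmono⟩
  have hxy : ¬ es 0 0 < es 1 0 := by
    intro hlt
    have h0 : ts 0 ≤ es 0 0 := hes1 0 0
    have h1 : ts 1 ≤ es 1 0 := hes1 1 0
    rcases h1.lt_or_eq with h2 | h2
    · have h3 : ts 0 < es 1 0 := lt_of_le_of_lt h0 hlt
      have hne : ts 0 ≠ ts 1 := fun he => by simpa using htsinj he
      rcases iio_cmp hT h3 h2 with hc | hc
      · exact hNincomp (htsN 0) (htsN 1) (hc.lt_of_ne hne)
      · exact hNincomp (htsN 1) (htsN 0) (hc.lt_of_ne hne.symm)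
    · exact hNincomp (htsN 0) (htsN 1) (h2 ▸ lt_of_le_of_lt h0 hlt)
  apply hxy
  apply (hauto.2 (es 0 0) (es 1 0)).mpr
  rw [hFval 0 0, hFval 1 0]
  exact hdviol

end Hard

end Stmt6Aux

/-- Let `T` be a countably infinite tree with `ht(T) = ω` all of whose
branches have height `ω`. Then `T` is reversible iff every node of `T` is finite. -/
theorem stmt6 {T : Type u} [PartialOrder T] (hT : IsTree T)
    (hcard : Cardinal.mk T = Cardinal.aleph0)
    (hht : treeHeight T = Ordinal.omega0)
    (hbr : ∀ b : Set T, IsBranch b → chainHt b = Ordinal.omega0) :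
    Reversible T ↔ ∀ N : Set T, IsNode N → N.Finite := by
  haveI hcnt : Countable T := Cardinal.mk_le_aleph0_iff.mp (le_of_eq hcard)
  haveI hinf : Infinite T := Cardinal.aleph0_le_mk_iff.mp (ge_of_eq hcard)
  have hfin := Stmt6Aux.iio_finite hT hbr
  have hups := Stmt6Aux.upset_infinite hT hbr
  constructor
  · intro hrev N hnode
    by_contra hNfin
    obtain ⟨t₀, rfl⟩ := hnode
    exact Stmt6Aux.not_rev_of_infinite_node hT hfin hups t₀ hNfin hrev
  · intro hnode
    exact Stmt6Aux.rev_of_nodes_finite hT hfin hnode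
end
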